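/- arXiv:2410.23486 — 6 statements merged into one kernel-verified Lean document; each statement's English description precedes it below -/
import Mathlib

section
/- Let r ≥ 1 be an integer and let λ = (λ_1 ≥ λ_2 ≥ … ≥ λ_r ≥ 0) be a partition. In the polynomial ring ℤ[y_1,…,y_r], the determinant det( (1 − y_j)^{λ_i + r − i} · y_j^{i−1} )_{1≤i,j≤r} is divisible by the Vandermonde determinant det( y_j^{i−1} )_{1≤i,j≤r} = ∏_{1≤i<j≤r}(y_j − y_i), and the quotient Q ∈ ℤ[y_1,…,y_r] is a symmetric polynomial whose constant term Q(0,…,0) equals 1 and whose degree in each individual variable y_j is at most λ_1. -/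
/-!
Write `alternant f = det (f_i(y_j))` for univariate polynomials `f_i`. It vanishes when
`y_a = y_b`, so it is divisible by each of the pairwise non-associate primes `y_b - y_a`,
hence by the Vandermonde determinant `alternant (t^i)`; both are alternating, so the quotient
is symmetric. For `f_i = u_i t^i` the lowest homogeneous component of `alternant f` is
`∏ u_i(0)` times the Vandermonde determinant, which yields `Q(0) = ∏ u_i(0)`. Finally
`alternant f` has degree at most `max deg f_i` in each variable while the Vandermonde
determinant has degree exactly `r - 1`.
-/

open MvPolynomial

namespace MvPolynomial

variable {σ R : Type*} [CommRing R]

theorem X_sub_dvd_of_aeval_update_eq_zero [DecidableEq σ] {p : MvPolynomial σ R} (a : σ)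
    (g : MvPolynomial σ R) (h : aeval (Function.update X a g) p = 0) : X a - g ∣ p := by
  set I := Ideal.span {X a - g}
  have hmk : (Ideal.Quotient.mkₐ R I).comp (aeval (Function.update X a g)) =
      Ideal.Quotient.mkₐ R I := by
    ext k
    by_cases hk : k = a
    · subst hk
      simp only [AlgHom.comp_apply, aeval_X, Function.update_self, Ideal.Quotient.mkₐ_eq_mk,
        Ideal.Quotient.eq, Ideal.mem_span_singleton, I]
      exact ⟨-1, by ring⟩
    · simp [Function.update_of_ne hk]
  rw [← Ideal.mem_span_singleton, ← Ideal.Quotient.eq_zero_iff_mem,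
    ← Ideal.Quotient.mkₐ_eq_mk R, ← hmk, AlgHom.comp_apply, h, map_zero]

theorem prime_X_sub_X [IsDomain R] [DecidableEq σ] {a b : σ} (h : b ≠ a) :
    Prime (X a - X b : MvPolynomial σ R) := by
  let E : MvPolynomial σ R ≃ₐ[R] Polynomial (MvPolynomial {c // c ≠ a} R) :=
    (renameEquiv R (Equiv.optionSubtypeNe a).symm).trans (optionEquivLeft R _)
  rw [← MulEquiv.prime_iff E.toMulEquiv]
  convert Polynomial.prime_X_sub_C (X ⟨b, h⟩ : MvPolynomial {c // c ≠ a} R)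
  simp [E, Equiv.optionSubtypeNe_symm_of_ne h]

theorem mem_pair_of_X_sub_X_dvd [Nontrivial R] {a b c d : σ} (hcd : c ≠ d)
    (h : (X b - X a : MvPolynomial σ R) ∣ X d - X c) :
    c ∈ ({a, b} : Set σ) ∧ d ∈ ({a, b} : Set σ) := by
  classical
  have hvanish : ∀ m, m ≠ a → m ≠ b →
      eval (Pi.single m 1) (X d - X c : MvPolynomial σ R) = 0 := by
    rintro m ha hb
    obtain ⟨q, hq⟩ := h
    simp [hq, Ne.symm ha, Ne.symm hb]
  simp only [Set.mem_insert_iff, Set.mem_singleton_iff]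
  constructor
  · by_contra! hc
    simpa [Pi.single_apply, hcd.symm] using hvanish c hc.1 hc.2
  · by_contra! hd
    simpa [Pi.single_apply, hcd] using hvanish d hd.1 hd.2

theorem degreeOf_X_sub_X [Nontrivial R] [DecidableEq σ] {i j : σ} (hij : i ≠ j) (k : σ) :
    degreeOf k (X j - X i : MvPolynomial σ R) =
      (if k = j then 1 else 0) + (if k = i then 1 else 0) := by
  rcases eq_or_ne k j with rfl | hkj
  · rw [sub_eq_add_neg, degreeOf_add_eq_of_degreeOf_lt] <;>
      simp [degreeOf_neg, degreeOf_X, hij.symm]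
  rcases eq_or_ne k i with rfl | hki
  · rw [sub_eq_neg_add, degreeOf_add_eq_of_degreeOf_lt] <;> simp [degreeOf_neg, degreeOf_X, hkj]
  have := degreeOf_sub_le k (X j : MvPolynomial σ R) (X i)
  simp [degreeOf_X, hkj, hki] at this ⊢
  omega

theorem degreeOf_aeval_X_le [DecidableEq σ] (p : Polynomial R) (j k : σ) :
    degreeOf k (Polynomial.aeval (X j : MvPolynomial σ R) p) ≤
      if k = j then p.natDegree else 0 := by
  rw [Polynomial.aeval_eq_sum_range]
  refine (degreeOf_sum_le _ _ _).trans (Finset.sup_le fun m hm => ?_)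
  rw [smul_eq_C_mul]
  refine (degreeOf_C_mul_le _ _ _).trans ((degreeOf_pow_le _ _ _).trans ?_)
  rcases subsingleton_or_nontrivial R with hR | hR
  · simp [Subsingleton.elim (X j : MvPolynomial σ R) 0]
  rw [degreeOf_X]
  split_ifs
  · simpa [Nat.lt_succ_iff] using hm
  · simp

theorem constantCoeff_aeval_X (i : σ) (p : Polynomial R) :
    constantCoeff (Polynomial.aeval (X i : MvPolynomial σ R) p) = p.coeff 0 := by
  induction p using Polynomial.induction_on' <;>
    simp_all [Polynomial.coeff_monomial, zero_pow_eq, eq_comm]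

theorem IsHomogeneous.homogeneousComponent_mul {p : MvPolynomial σ R} {d : ℕ}
    (hp : p.IsHomogeneous d) (q : MvPolynomial σ R) :
    homogeneousComponent d (p * q) = p * C (constantCoeff q) := by
  classical
  let _ := MvPolynomial.gradedAlgebra (σ := σ) (R := R)
  have hdec : ∀ x n, (DirectSum.decompose (homogeneousSubmodule σ R) x n : MvPolynomial σ R) =
      homogeneousComponent n x := decomposition.decompose'_apply
  have := DirectSum.coe_decompose_mul_of_left_mem_of_le (homogeneousSubmodule σ R) (b := q)
    ((mem_homogeneousSubmodule d p).mpr hp) le_rfl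
  rwa [hdec, hdec, Nat.sub_self, homogeneousComponent_zero, ← constantCoeff_eq] at this

section Alternant

variable {n : ℕ}

noncomputable def alternant (f : Fin n → Polynomial R) : MvPolynomial (Fin n) R :=
  (Matrix.of fun i j => Polynomial.aeval (X j : MvPolynomial (Fin n) R) (f i)).det

theorem alternant_X_pow :
    alternant (fun i : Fin n => (Polynomial.X : Polynomial R) ^ (i : ℕ)) =
      ∏ i : Fin n, ∏ j ∈ Finset.Ioi i, (X j - X i : MvPolynomial (Fin n) R) := by
  rw [alternant, ← Matrix.det_transpose, ← Matrix.det_vandermonde]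
  congr 1
  ext i j
  simp [Matrix.vandermonde_apply]

theorem rename_alternant (e : Equiv.Perm (Fin n)) (f : Fin n → Polynomial R) :
    rename e (alternant f) = (Equiv.Perm.sign e : ℤ) * alternant f := by
  rw [alternant, AlgHom.map_det, ← Matrix.det_permute']
  congr 1
  ext i j
  simp

theorem X_sub_X_dvd_alternant {a b : Fin n} (hab : a ≠ b) (f : Fin n → Polynomial R) :
    X a - X b ∣ alternant f := by
  refine X_sub_dvd_of_aeval_update_eq_zero a (X b) ?_
  rw [alternant, AlgHom.map_det]
  refine Matrix.det_zero_of_column_eq hab fun k => ?_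
  simp only [AlgHom.mapMatrix_apply, Matrix.map_apply, Matrix.of_apply]
  rw [← Polynomial.aeval_algHom_apply, ← Polynomial.aeval_algHom_apply, aeval_X, aeval_X,
    Function.update_self, Function.update_of_ne hab.symm]

theorem degreeOf_alternant_le {f : Fin n → Polynomial R} {D : ℕ}
    (hf : ∀ i, (f i).natDegree ≤ D) (k : Fin n) : degreeOf k (alternant f) ≤ D := by
  rw [alternant, Matrix.det_apply']
  refine (degreeOf_sum_le _ _ _).trans (Finset.sup_le fun e _ => ?_)
  refine (degreeOf_mul_le _ _ _).trans ?_
  rw [← map_intCast (C : R →+* MvPolynomial (Fin n) R), degreeOf_C, zero_add]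
  refine (degreeOf_prod_le _ _ _).trans ?_
  calc ∑ i, degreeOf k (Polynomial.aeval (X i : MvPolynomial (Fin n) R) (f (e i)))
      ≤ ∑ i, if k = i then D else 0 :=
        Finset.sum_le_sum fun i _ =>
          (degreeOf_aeval_X_le _ i k).trans (by split_ifs <;> simp [hf])
    _ = D := by simp

theorem homogeneousComponent_alternant_mul_X_pow (u : Fin n → Polynomial R) :
    homogeneousComponent (∑ i : Fin n, (i : ℕ))
        (alternant fun i => u i * Polynomial.X ^ (i : ℕ)) =
      C (∏ i, (u i).coeff 0) * alternant fun i => Polynomial.X ^ (i : ℕ) := by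
  simp only [alternant, Matrix.det_apply', map_sum, Finset.mul_sum]
  refine Finset.sum_congr rfl fun e _ => ?_
  have hsplit : ∏ i, Matrix.of (fun i j => Polynomial.aeval (X j : MvPolynomial (Fin n) R)
      (u i * Polynomial.X ^ (i : ℕ))) (e i) i =
      (∏ i, X i ^ (e i : ℕ)) * ∏ i, Polynomial.aeval (X i) (u (e i)) := by
    simp only [Matrix.of_apply, map_mul, map_pow, Polynomial.aeval_X, ← Finset.prod_mul_distrib]
    exact Finset.prod_congr rfl fun i _ => mul_comm _ _
  have hhom : (∏ i, X i ^ (e i : ℕ) : MvPolynomial (Fin n) R).IsHomogeneous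
      (∑ i : Fin n, (i : ℕ)) := by
    rw [← Equiv.sum_comp e]
    exact IsHomogeneous.prod _ _ _ fun i _ => isHomogeneous_X_pow _ _
  rw [hsplit, ← map_intCast (C : R →+* MvPolynomial (Fin n) R), homogeneousComponent_C_mul,
    hhom.homogeneousComponent_mul, map_prod]
  simp only [constantCoeff_aeval_X, Matrix.of_apply, Polynomial.aeval_X_pow,
    Equiv.prod_comp e fun i => (u i).coeff 0]
  ring

theorem isHomogeneous_alternant_X_pow :
    (alternant fun i : Fin n => (Polynomial.X : Polynomial R) ^ (i : ℕ)).IsHomogeneous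
      (∑ i : Fin n, (i : ℕ)) := by
  have h := homogeneousComponent_alternant_mul_X_pow (fun _ : Fin n => (1 : Polynomial R))
  simp only [one_mul, Polynomial.coeff_one_zero, Finset.prod_const_one, map_one] at h
  exact h ▸ homogeneousComponent_isHomogeneous _ _

end Alternant

section Domain

variable [IsDomain R] {n : ℕ}

theorem alternant_X_pow_ne_zero :
    alternant (fun i : Fin n => (Polynomial.X : Polynomial R) ^ (i : ℕ)) ≠ 0 := by
  rw [alternant_X_pow, ← Matrix.det_vandermonde]
  exact Matrix.det_vandermonde_ne_zero_iff.mpr X_injective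

theorem degreeOf_alternant_X_pow (k : Fin n) :
    degreeOf k (alternant fun i : Fin n => (Polynomial.X : Polynomial R) ^ (i : ℕ)) = n - 1 := by
  have hne : ∀ i, ∀ j ∈ Finset.Ioi i, (X j - X i : MvPolynomial (Fin n) R) ≠ 0 :=
    fun i j hj => sub_ne_zero.mpr ((X_injective (R := R)).ne (Finset.mem_Ioi.mp hj).ne')
  rw [alternant_X_pow, degreeOf_prod_eq _ _ fun i _ => Finset.prod_ne_zero_iff.mpr (hne i)]
  rw [Finset.sum_congr rfl fun i _ => (degreeOf_prod_eq _ _ (hne i)).trans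
    (Finset.sum_congr rfl fun j hj => degreeOf_X_sub_X (Finset.mem_Ioi.mp hj).ne k)]
  simp only [Finset.sum_add_distrib, Finset.sum_ite_eq, Finset.mem_Ioi, Finset.sum_ite_irrel,
    Finset.sum_const, Fin.card_Ioi, smul_eq_mul, mul_one, mul_zero, Finset.sum_boole, Nat.cast_id,
    Finset.mem_univ, if_true]
  rw [Finset.filter_gt_eq_Iio, Fin.card_Iio]
  omega

theorem alternant_X_pow_dvd [UniqueFactorizationMonoid R] (f : Fin n → Polynomial R) :
    alternant (fun i : Fin n => (Polynomial.X : Polynomial R) ^ (i : ℕ)) ∣ alternant f := by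
  rw [alternant_X_pow, Finset.prod_sigma']
  refine Finset.prod_dvd_of_isRelPrime ?_ fun x hx => X_sub_X_dvd_alternant ?_ f
  · rintro ⟨a, b⟩ hab ⟨c, d⟩ hcd hne
    simp only [Finset.coe_sigma, Set.mem_sigma_iff, Finset.coe_univ, Set.mem_univ,
      Finset.coe_Ioi, Set.mem_Ioi, true_and] at hab hcd
    show IsRelPrime (X b - X a : MvPolynomial (Fin n) R) (X d - X c)
    refine ((prime_X_sub_X hab.ne).irreducible.isRelPrime_iff_not_dvd).mpr fun hdvd => hne ?_
    obtain ⟨hc | rfl, hd | rfl⟩ := mem_pair_of_X_sub_X_dvd hcd.ne hdvd <;> subst_vars <;>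
      first | rfl | order
  · exact (Finset.mem_Ioi.mp (Finset.mem_sigma.mp hx).2).ne'

variable {Q : MvPolynomial (Fin n) R}

theorem isSymmetric_of_alternant_eq_mul {f : Fin n → Polynomial R}
    (hQ : alternant f =
      alternant (fun i : Fin n => (Polynomial.X : Polynomial R) ^ (i : ℕ)) * Q) :
    Q.IsSymmetric := by
  intro e
  have hsign : ((Equiv.Perm.sign e : ℤ) : MvPolynomial (Fin n) R) ≠ 0 :=
    ((Equiv.Perm.sign e).isUnit.map (Int.castRingHom _)).ne_zero
  have h := congrArg (rename e) hQ
  rw [map_mul, rename_alternant, rename_alternant, hQ, mul_assoc] at h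
  exact mul_left_cancel₀ alternant_X_pow_ne_zero (mul_left_cancel₀ hsign h).symm

theorem constantCoeff_of_alternant_eq_mul {u : Fin n → Polynomial R}
    (hQ : alternant (fun i => u i * Polynomial.X ^ (i : ℕ)) =
      alternant (fun i : Fin n => (Polynomial.X : Polynomial R) ^ (i : ℕ)) * Q) :
    constantCoeff Q = ∏ i, (u i).coeff 0 := by
  have h := congrArg (homogeneousComponent (∑ i : Fin n, (i : ℕ))) hQ
  rw [homogeneousComponent_alternant_mul_X_pow,
    isHomogeneous_alternant_X_pow.homogeneousComponent_mul, mul_comm] at h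
  exact C_injective _ _ (mul_left_cancel₀ alternant_X_pow_ne_zero h).symm

theorem degreeOf_le_of_alternant_eq_mul {f : Fin n → Polynomial R} {D : ℕ}
    (hf : ∀ i, (f i).natDegree ≤ D)
    (hQ : alternant f =
      alternant (fun i : Fin n => (Polynomial.X : Polynomial R) ^ (i : ℕ)) * Q)
    (k : Fin n) : degreeOf k Q ≤ D - (n - 1) := by
  rcases eq_or_ne Q 0 with rfl | hQ0
  · simp
  have h := degreeOf_alternant_le hf k
  rw [hQ, degreeOf_mul_eq alternant_X_pow_ne_zero hQ0, degreeOf_alternant_X_pow] at h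
  omega

end Domain

end MvPolynomial

/-- For a partition `λ = (λ_1 ≥ … ≥ λ_r ≥ 0)`, the determinant
`det((1 - y_j)^(λ_i + r - i) · y_j^(i-1))` in `ℤ[y_1,…,y_r]` is divisible by the
Vandermonde determinant `det(y_j^(i-1))`, and the quotient `Q` is a symmetric polynomial
with constant term `1` whose degree in each variable is at most `λ_1`. -/
theorem stmt0 (r : ℕ) (hr : 1 ≤ r) (lam : Fin r → ℕ) (hlam : Antitone lam) :
    ∃ Q : MvPolynomial (Fin r) ℤ,
      Matrix.det (Matrix.of fun i j : Fin r =>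
          (1 - (X j : MvPolynomial (Fin r) ℤ)) ^ (lam i + (r - 1 - (i : ℕ))) * X j ^ (i : ℕ)) =
        Matrix.det (Matrix.of fun i j : Fin r =>
          (X j : MvPolynomial (Fin r) ℤ) ^ (i : ℕ)) * Q ∧
      Q.IsSymmetric ∧
      constantCoeff Q = 1 ∧
      ∀ j : Fin r, degreeOf j Q ≤ lam ⟨0, hr⟩ := by
  set u : Fin r → Polynomial ℤ := fun i => (1 - Polynomial.X) ^ (lam i + (r - 1 - (i : ℕ)))
  have hM : Matrix.det (Matrix.of fun i j : Fin r =>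
      (1 - (X j : MvPolynomial (Fin r) ℤ)) ^ (lam i + (r - 1 - (i : ℕ))) * X j ^ (i : ℕ)) =
      alternant fun i => u i * Polynomial.X ^ (i : ℕ) := by
    rw [alternant]
    congr 1
    ext i j
    simp [u]
  have hV : Matrix.det (Matrix.of fun i j : Fin r => (X j : MvPolynomial (Fin r) ℤ) ^ (i : ℕ)) =
      alternant fun i => Polynomial.X ^ (i : ℕ) := by
    rw [alternant]
    congr 1
    ext i j
    simp
  obtain ⟨Q, hQ⟩ := alternant_X_pow_dvd fun i => u i * Polynomial.X ^ (i : ℕ)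
  refine ⟨Q, by rw [hM, hV, hQ], isSymmetric_of_alternant_eq_mul hQ, ?_, fun k => ?_⟩
  · simp [constantCoeff_of_alternant_eq_mul hQ, u, Polynomial.coeff_zero_eq_eval_zero]
  · have hdeg : ∀ i : Fin r,
        (u i * Polynomial.X ^ (i : ℕ)).natDegree ≤ lam ⟨0, hr⟩ + (r - 1) := by
      intro i
      have hi : lam i ≤ lam ⟨0, hr⟩ := hlam (Nat.zero_le i)
      simp only [u]
      compute_degree
      omega
    exact (degreeOf_le_of_alternant_eq_mul hdeg hQ k).trans (by omega)
end

section
/- Let K be a field, let N ≥ r ≥ 1 be integers, and let z_1,…,z_N ∈ K be pairwise distinct and nonzero. Let λ = (λ_1 ≥ … ≥ λ_r ≥ 0) be a partition and d ≥ 0 an integer, and set f_i(z) = z^d (1 − z^{-1})^{λ_i + r − i} for 1 ≤ i ≤ r. Then Σ_{I ⊆ {1,…,N}, |I| = r} G_λ( (1 − z_i^{-1})_{i∈I} ) · ∏_{i∈I} ( z_i^{N−r+d} / ∏_{j∉I} (z_i − z_j) ) = s_{(f_1,…,f_r)}(z_1,…,z_N). -/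
/-!
Expand the numerator determinant of `s_f` along its first `r` rows (generalized Laplace
expansion). Write `Δ(v) = ∏_{i<j} (v_i - v_j)`. For a column set `I`, pulling `z_i ^ (N - 1 + d)`
out of each column turns the top minor into the bialternant numerator of `G_λ` at
`w_i = 1 - z_i⁻¹`, because `1 - w_i = z_i⁻¹`; the bottom minor is `Δ(z_{Iᶜ})`. Up to the sign of
the shuffle permutation, which also appears in the Laplace expansion,
`Δ(z) = Δ(z_I) Δ(z_{Iᶜ}) ∏_{i ∈ I, j ∉ I} (z_i - z_j)`, and `Δ(z_I) = Δ(w) ∏_{i ∈ I} z_i ^ (r - 1)`.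
Dividing by `Δ(z)`, the `I`-th Laplace term becomes the `I`-th summand on the left.
-/

/-- The stable Grothendieck polynomial `G_λ(x_1,…,x_r)` evaluated at field elements,
via the bialternant formula
`G_λ(x) = det(x_j^{λ_i+r-i}(1-x_j)^{i-1}) / det(x_j^{r-i})`. -/
noncomputable def grothVal {K : Type*} [Field K] (r : ℕ) (lam : Fin r → ℕ)
    (w : Fin r → K) : K :=
  Matrix.det (Matrix.of fun i j : Fin r =>
      w j ^ (lam i + (r - 1 - (i : ℕ))) * (1 - w j) ^ (i : ℕ)) /
  Matrix.det (Matrix.of fun i j : Fin r => w j ^ (r - 1 - (i : ℕ)))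

/-- The generalized Schur function `s_{(f_1,…,f_r)}(z_1,…,z_N)` attached to functions
`f_1,…,f_r` (e.g. Laurent polynomials): `det(M) / det(z_j^{N-i})` where `M_{i,j} =
f_i(z_j)·z_j^{N-i}` for `i ≤ r` and `M_{i,j} = z_j^{N-i}` for `i > r`. -/
noncomputable def genSchurFun {K : Type*} [Field K] (N r : ℕ) (f : Fin r → K → K)
    (z : Fin N → K) : K :=
  Matrix.det (Matrix.of fun i j : Fin N =>
      (if h : (i : ℕ) < r then f ⟨i, h⟩ (z j) else 1) * z j ^ ((N : ℤ) - 1 - ((i : ℕ) : ℤ))) /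
  Matrix.det (Matrix.of fun i j : Fin N => z j ^ ((N : ℤ) - 1 - ((i : ℕ) : ℤ)))

open Finset Matrix Equiv

namespace Fin

variable {M : Type*} [CommMonoid M]

theorem prod_prod_Ioi_mul_eq_prod_pow {n : ℕ} (u : Fin n → M) :
    ∏ i, ∏ j ∈ Ioi i, (u i * u j) = ∏ i, u i ^ (n - 1) := by
  rw [prod_prod_Ioi_mul_eq_prod_prod_off_diag (fun _ j => u j)]
  simp [card_compl]

theorem prod_prod_Ioi_add {r s : ℕ} (F : Fin (r + s) → Fin (r + s) → M) :
    ∏ i, ∏ j ∈ Ioi i, F i j =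
      (∏ a, ∏ b ∈ Ioi a, F (castAdd s a) (castAdd s b)) *
        (∏ a, ∏ b ∈ Ioi a, F (natAdd r a) (natAdd r b)) *
          ∏ a : Fin r, ∏ b : Fin s, F (castAdd s a) (natAdd r b) := by
  have hIoi : ∀ {n} (i : Fin n), Ioi i = univ.filter (i < ·) := fun i => by ext; simp
  have hcast : ∀ a b : Fin r, castAdd s a < castAdd s b ↔ a < b := fun _ _ => Iff.rfl
  have hlt : ∀ (a : Fin r) (b : Fin s), castAdd s a < natAdd r b := fun a b => by
    simp [lt_def]; omega
  have hnlt : ∀ (a : Fin r) (b : Fin s), ¬ natAdd r b < castAdd s a := fun a b => by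
    simp [lt_def]; omega
  simp only [hIoi, prod_filter, prod_univ_add, hcast, natAdd_lt_natAdd_iff, hlt, hnlt, if_true,
    if_false, prod_const_one, mul_one, prod_mul_distrib]
  ac_rfl

end Fin

section Vandermonde

variable {R : Type*} [CommRing R] {n : ℕ}

theorem Matrix.det_of_pow_sub_one_sub (v : Fin n → R) :
    det (of fun i j : Fin n => v j ^ (n - 1 - (i : ℕ))) =
      ∏ i, ∏ j ∈ Ioi i, (v i - v j) := by
  have h : (of fun i j : Fin n => v j ^ (n - 1 - (i : ℕ))) = (projVandermonde 1 v)ᵀ := by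
    ext i j
    simp [projVandermonde_apply, Fin.val_rev, Nat.sub_sub, add_comm]
  simp [h, det_projVandermonde]

theorem Fin.prod_prod_Ioi_sub_comp_perm (v : Fin n → R) (σ : Perm (Fin n)) :
    ∏ i, ∏ j ∈ Ioi i, (v (σ i) - v (σ j)) = Perm.sign σ * ∏ i, ∏ j ∈ Ioi i, (v i - v j) := by
  rw [← det_of_pow_sub_one_sub, ← det_of_pow_sub_one_sub, ← det_permute']
  rfl

theorem Fin.prod_prod_Ioi_sub_ne_zero [IsDomain R] {v : Fin n → R}
    (hv : Function.Injective v) :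
    ∏ i, ∏ j ∈ Ioi i, (v i - v j) ≠ 0 :=
  prod_ne_zero_iff.2 fun _ _ => prod_ne_zero_iff.2 fun _ hj =>
    sub_ne_zero.2 (hv.ne (mem_Ioi.1 hj).ne)

theorem Fin.prod_prod_Ioi_sub_eq_one_sub_inv_mul {K : Type*} [Field K] (x : Fin n → K)
    (hx : ∀ a, x a ≠ 0) :
    ∏ a, ∏ b ∈ Ioi a, (x a - x b) =
      (∏ a, ∏ b ∈ Ioi a, ((1 - (x a)⁻¹) - (1 - (x b)⁻¹))) * ∏ a, x a ^ (n - 1) := by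
  rw [← prod_prod_Ioi_mul_eq_prod_pow, ← prod_mul_distrib]
  refine prod_congr rfl fun a _ => ?_
  rw [← prod_mul_distrib]
  refine prod_congr rfl fun b _ => ?_
  field_simp [hx a, hx b]
  ring

end Vandermonde

namespace Finset

theorem prod_orderEmbOfFin {α M : Type*} [LinearOrder α] [CommMonoid M] (I : Finset α)
    {k : ℕ} (hI : #I = k) (g : α → M) :
    ∏ a, g (I.orderEmbOfFin hI a) = ∏ i ∈ I, g i := by
  conv_rhs => rw [← image_orderEmbOfFin_univ I hI]
  rw [prod_image fun a _ b _ h => (I.orderEmbOfFin hI).injective h]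

variable {r s : ℕ} {I : Finset (Fin (r + s))}

theorem card_compl_eq_of_card_eq (hI : #I = r) : #Iᶜ = s := by
  rw [card_compl, hI, Fintype.card_fin, Nat.add_sub_cancel_left]

noncomputable def shufflePerm (hI : #I = r) : Perm (Fin (r + s)) :=
  finSumFinEquiv.symm.trans (finSumEquivOfFinset hI (card_compl_eq_of_card_eq hI))

@[simp]
theorem shufflePerm_castAdd (hI : #I = r) (a : Fin r) :
    shufflePerm hI (Fin.castAdd s a) = I.orderEmbOfFin hI a := by
  simp [shufflePerm]

@[simp]
theorem shufflePerm_natAdd (hI : #I = r) (b : Fin s) :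
    shufflePerm hI (Fin.natAdd r b) = Iᶜ.orderEmbOfFin (card_compl_eq_of_card_eq hI) b := by
  simp [shufflePerm]

theorem sign_shufflePerm_mul_prod_prod_Ioi_sub {R : Type*} [CommRing R] (hI : #I = r)
    (z : Fin (r + s) → R) :
    Perm.sign (shufflePerm hI) * ∏ i, ∏ j ∈ Ioi i, (z i - z j) =
      (∏ a, ∏ b ∈ Ioi a, (z (I.orderEmbOfFin hI a) - z (I.orderEmbOfFin hI b))) *
        (∏ a, ∏ b ∈ Ioi a, (z (Iᶜ.orderEmbOfFin (card_compl_eq_of_card_eq hI) a) -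
          z (Iᶜ.orderEmbOfFin (card_compl_eq_of_card_eq hI) b))) *
        ∏ a, ∏ b, (z (I.orderEmbOfFin hI a) -
          z (Iᶜ.orderEmbOfFin (card_compl_eq_of_card_eq hI) b)) := by
  rw [← Fin.prod_prod_Ioi_sub_comp_perm, Fin.prod_prod_Ioi_add]
  simp only [shufflePerm_castAdd, shufflePerm_natAdd]

end Finset

section Laplace

variable {r s : ℕ}

noncomputable def laplacePerm (t : Σ _ : powersetCard r (univ : Finset (Fin (r + s))),
    Perm (Fin r) × Perm (Fin s)) : Perm (Fin (r + s)) :=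
  shufflePerm (mem_powersetCard.1 t.1.2).2 * finSumFinEquiv.permCongr (t.2.1.sumCongr t.2.2)

variable (I : powersetCard r (univ : Finset (Fin (r + s)))) (τ : Perm (Fin r)) (ρ : Perm (Fin s))

@[simp]
theorem laplacePerm_castAdd (a : Fin r) :
    laplacePerm ⟨I, τ, ρ⟩ (Fin.castAdd s a) =
      I.1.orderEmbOfFin (mem_powersetCard.1 I.2).2 (τ a) := by
  simp [laplacePerm, permCongr_apply]

@[simp]
theorem laplacePerm_natAdd (b : Fin s) :
    laplacePerm ⟨I, τ, ρ⟩ (Fin.natAdd r b) =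
      I.1ᶜ.orderEmbOfFin (card_compl_eq_of_card_eq (mem_powersetCard.1 I.2).2) (ρ b) := by
  simp [laplacePerm, permCongr_apply]

theorem sign_laplacePerm :
    Perm.sign (laplacePerm ⟨I, τ, ρ⟩) =
      Perm.sign (shufflePerm (mem_powersetCard.1 I.2).2) * (Perm.sign τ * Perm.sign ρ) := by
  simp [laplacePerm, Perm.sign_permCongr, Perm.sign_sumCongr]

theorem image_laplacePerm_castAdd :
    univ.image (fun a => laplacePerm ⟨I, τ, ρ⟩ (Fin.castAdd s a)) = I.1 := by
  simp only [laplacePerm_castAdd]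
  exact (image_image (f := τ)).symm.trans (by rw [image_univ_equiv, image_orderEmbOfFin_univ])

theorem laplacePerm_injective : Function.Injective (laplacePerm (r := r) (s := s)) := by
  rintro ⟨I, τ, ρ⟩ ⟨I', τ', ρ'⟩ h
  have hI : I = I' := by
    ext1
    rw [← image_laplacePerm_castAdd I τ ρ, ← image_laplacePerm_castAdd I' τ' ρ', h]
  subst hI
  have hτ : τ = τ' := Equiv.ext fun a => by simpa using congr($h (Fin.castAdd s a))
  have hρ : ρ = ρ' := Equiv.ext fun b => by simpa using congr($h (Fin.natAdd r b))
  rw [hτ, hρ]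

theorem laplacePerm_bijective : Function.Bijective (laplacePerm (r := r) (s := s)) := by
  refine (Fintype.bijective_iff_injective_and_card _).2 ⟨laplacePerm_injective, ?_⟩
  simp only [Fintype.card_sigma, Fintype.card_prod, Fintype.card_perm, Fintype.card_fin,
    sum_const, card_univ, Fintype.card_coe, card_powersetCard, smul_eq_mul]
  rw [← mul_assoc, ← Nat.add_choose_mul_factorial_mul_factorial, Nat.choose_symm_add]

theorem Matrix.det_eq_sum_powersetCard_det_mul_det {R : Type*} [CommRing R]
    (M : Matrix (Fin (r + s)) (Fin (r + s)) R) :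
    M.det = ∑ I ∈ (powersetCard r univ).attach,
      Perm.sign (shufflePerm (mem_powersetCard.1 I.2).2) *
        (det (M.submatrix (Fin.castAdd s) (I.1.orderEmbOfFin (mem_powersetCard.1 I.2).2)) *
          det (M.submatrix (Fin.natAdd r)
            (I.1ᶜ.orderEmbOfFin (card_compl_eq_of_card_eq (mem_powersetCard.1 I.2).2)))) := by
  rw [← det_transpose, det_apply',
    ← Fintype.sum_bijective _ laplacePerm_bijective _ _ fun _ => rfl, ← univ_sigma_univ,
    sum_sigma, univ_eq_attach]
  refine sum_congr rfl fun I _ => ?_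
  rw [← det_transpose, det_apply', ← det_transpose, det_apply', sum_mul_sum, mul_sum,
    Fintype.sum_prod_type]
  refine sum_congr rfl fun τ _ => ?_
  rw [mul_sum]
  refine sum_congr rfl fun ρ _ => ?_
  simp only [sign_laplacePerm, transpose_apply, submatrix_apply, Fin.prod_univ_add,
    laplacePerm_castAdd, laplacePerm_natAdd, Units.val_mul, Int.cast_mul]
  ring

end Laplace

section SchurNumerator

variable {R : Type*} [CommRing R]

noncomputable def schurNumerator (N r : ℕ) (f : Fin r → R → R) (z : Fin N → R) :
    Matrix (Fin N) (Fin N) R :=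
  of fun i j => (if h : (i : ℕ) < r then f ⟨i, h⟩ (z j) else 1) * z j ^ (N - 1 - (i : ℕ))

theorem schurNumerator_submatrix_castAdd {r s : ℕ} (f : Fin r → R → R) (z : Fin (r + s) → R)
    (e : Fin r → Fin (r + s)) :
    (schurNumerator (r + s) r f z).submatrix (Fin.castAdd s) e =
      of fun a c => f a (z (e c)) * z (e c) ^ (r + s - 1 - (a : ℕ)) := by
  ext a c
  simp [schurNumerator, a.isLt]

theorem det_schurNumerator_submatrix_natAdd {r s : ℕ} (f : Fin r → R → R)
    (z : Fin (r + s) → R) (e : Fin s → Fin (r + s)) :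
    det ((schurNumerator (r + s) r f z).submatrix (Fin.natAdd r) e) =
      ∏ a, ∏ b ∈ Ioi a, (z (e a) - z (e b)) := by
  rw [← det_of_pow_sub_one_sub]
  congr 1
  ext a c
  simp only [schurNumerator, submatrix_apply, of_apply, Fin.val_natAdd]
  rw [dif_neg (by omega), one_mul]
  congr 1
  omega

theorem genSchurFun_eq {K : Type*} [Field K] (N r : ℕ) (f : Fin r → K → K)
    (z : Fin N → K) :
    genSchurFun N r f z = det (schurNumerator N r f z) / ∏ i, ∏ j ∈ Ioi i, (z i - z j) := by
  have hexp : ∀ (x : K) (i : Fin N), x ^ ((N : ℤ) - 1 - ((i : ℕ) : ℤ)) = x ^ (N - 1 - (i : ℕ)) :=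
    fun x i => by
      rw [← zpow_natCast]
      congr 1
      omega
  simp only [genSchurFun, schurNumerator, hexp, det_of_pow_sub_one_sub]

end SchurNumerator

section Field

variable {K : Type*} [Field K]

theorem det_of_pow_mul_one_sub_inv_pow {r n : ℕ} (hrn : r ≤ n) (lam : Fin r → ℕ) (d : ℕ)
    (x : Fin r → K) (hx : ∀ c, x c ≠ 0) :
    det (of fun a c : Fin r =>
        x c ^ d * (1 - (x c)⁻¹) ^ (lam a + (r - 1 - (a : ℕ))) * x c ^ (n - 1 - (a : ℕ))) =
      (∏ c, x c ^ (n - 1 + d)) * det (of fun a c : Fin r =>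
        (1 - (x c)⁻¹) ^ (lam a + (r - 1 - (a : ℕ))) * (1 - (1 - (x c)⁻¹)) ^ (a : ℕ)) := by
  rw [← det_mul_row]
  congr 1
  ext a c
  have hexp : n - 1 + d = d + (n - 1 - a) + a := by omega
  simp only [of_apply, sub_sub_cancel, hexp, pow_add, inv_pow]
  field_simp [hx c]

theorem grothVal_mul_prod_eq_laplace_term {r s : ℕ} (z : Fin (r + s) → K)
    (hz : Function.Injective z) (hz0 : ∀ i, z i ≠ 0) (lam : Fin r → ℕ) (d : ℕ)
    {I : Finset (Fin (r + s))} (hI : #I = r) :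
    grothVal r lam (fun a => 1 - (z (I.orderEmbOfFin hI a))⁻¹) *
        ∏ i ∈ I, (z i ^ (s + d) / ∏ j ∈ Iᶜ, (z i - z j)) =
      Perm.sign (shufflePerm hI) *
          (det ((schurNumerator (r + s) r
              (fun i w => w ^ d * (1 - w⁻¹) ^ (lam i + (r - 1 - (i : ℕ)))) z).submatrix
              (Fin.castAdd s) (I.orderEmbOfFin hI)) *
            det ((schurNumerator (r + s) r
              (fun i w => w ^ d * (1 - w⁻¹) ^ (lam i + (r - 1 - (i : ℕ)))) z).submatrix
              (Fin.natAdd r) (Iᶜ.orderEmbOfFin (card_compl_eq_of_card_eq hI)))) /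
        ∏ i, ∏ j ∈ Ioi i, (z i - z j) := by
  set x : Fin r → K := fun a => z (I.orderEmbOfFin hI a)
  set y : Fin s → K := fun b => z (Iᶜ.orderEmbOfFin (card_compl_eq_of_card_eq hI) b)
  set w : Fin r → K := fun a => 1 - (x a)⁻¹
  have hgroth : grothVal r lam w =
      det (of fun a c : Fin r => w c ^ (lam a + (r - 1 - (a : ℕ))) * (1 - w c) ^ (a : ℕ)) /
        ∏ a, ∏ b ∈ Ioi a, (w a - w b) := by
    rw [grothVal, det_of_pow_sub_one_sub]
  have hprod : ∏ i ∈ I, (z i ^ (s + d) / ∏ j ∈ Iᶜ, (z i - z j)) =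
      (∏ a, x a ^ (s + d)) / ∏ a, ∏ b, (x a - y b) := by
    rw [prod_div_distrib, ← prod_orderEmbOfFin I hI, ← prod_orderEmbOfFin I hI]
    simp only [← prod_orderEmbOfFin Iᶜ (card_compl_eq_of_card_eq hI), x, y]
  have hpow : ∏ a, x a ^ (r + s - 1 + d) = (∏ a, x a ^ (s + d)) * ∏ a, x a ^ (r - 1) := by
    rw [← prod_mul_distrib]
    refine prod_congr rfl fun a _ => ?_
    rw [← pow_add]
    have := a.pos
    congr 1
    omega
  -- the shuffle sign appears both in the Laplace term and in the factorization of `Δ(z)`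
  have hsign :
      ((Perm.sign (shufflePerm hI) : ℤ) : K) * (Perm.sign (shufflePerm hI) : ℤ) = 1 := by
    rw [← Int.cast_mul, ← Units.val_mul, Int.units_mul_self, Units.val_one, Int.cast_one]
  have hsplit : ∏ i, ∏ j ∈ Ioi i, (z i - z j) = Perm.sign (shufflePerm hI) *
      ((∏ a, ∏ b ∈ Ioi a, (w a - w b)) * (∏ a, x a ^ (r - 1)) *
        (∏ a, ∏ b ∈ Ioi a, (y a - y b)) * ∏ a, ∏ b, (x a - y b)) := by
    rw [← Fin.prod_prod_Ioi_sub_eq_one_sub_inv_mul x fun c => hz0 _,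
      ← sign_shufflePerm_mul_prod_prod_Ioi_sub, ← mul_assoc, hsign, one_mul]
  have hne := Fin.prod_prod_Ioi_sub_ne_zero hz
  simp only [hsplit, mul_ne_zero_iff] at hne
  obtain ⟨hε, ⟨⟨⟨hw, hx⟩, hy⟩, hxy⟩⟩ := hne
  rw [hgroth, hprod, hsplit, schurNumerator_submatrix_castAdd,
    det_of_pow_mul_one_sub_inv_pow (Nat.le_add_right r s) lam d x fun c => hz0 _,
    det_schurNumerator_submatrix_natAdd, hpow]
  simp only [w, x, y] at hw hx hy hxy ⊢
  field_simp

end Field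

theorem stmt2_general {K : Type*} [Field K] (N r : ℕ) (hrN : r ≤ N)
    (z : Fin N → K) (hz : Function.Injective z) (hz0 : ∀ i, z i ≠ 0)
    (lam : Fin r → ℕ) (d : ℕ) :
    ∑ I ∈ (Finset.powersetCard r (Finset.univ : Finset (Fin N))).attach,
        grothVal r lam
            (fun a =>
              1 - (z ((I.1.orderIsoOfFin (Finset.mem_powersetCard.mp I.2).2 a : Fin N)))⁻¹) *
          ∏ i ∈ I.1, (z i ^ ((N : ℤ) - (r : ℤ) + (d : ℤ)) / ∏ j ∈ I.1ᶜ, (z i - z j)) =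
      genSchurFun N r
        (fun i w => w ^ d * (1 - w⁻¹) ^ (lam i + (r - 1 - (i : ℕ)))) z := by
  obtain ⟨s, rfl⟩ := Nat.exists_eq_add_of_le hrN
  have hexp : ((r + s : ℕ) : ℤ) - r + d = ((s + d : ℕ) : ℤ) := by push_cast; ring
  simp only [hexp, zpow_natCast, coe_orderIsoOfFin_apply]
  rw [genSchurFun_eq, det_eq_sum_powersetCard_det_mul_det, sum_div]
  exact sum_congr rfl fun I _ => grothVal_mul_prod_eq_laplace_term z hz hz0 lam d _

/-- For pairwise distinct nonzero `z_1,…,z_N` in a field, a partition `λ`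
with `r` parts and `d ≥ 0`, setting `f_i(z) = z^d (1 - z⁻¹)^{λ_i + r - i}`, one has
`Σ_{|I| = r} G_λ((1 - z_i⁻¹)_{i∈I}) ∏_{i∈I} (z_i^{N-r+d} / ∏_{j∉I}(z_i - z_j))
  = s_{(f_1,…,f_r)}(z_1,…,z_N)`. -/
theorem stmt2 {K : Type*} [Field K] (N r : ℕ) (hr : 1 ≤ r) (hrN : r ≤ N)
    (z : Fin N → K) (hz : Function.Injective z) (hz0 : ∀ i, z i ≠ 0)
    (lam : Fin r → ℕ) (hlam : Antitone lam) (d : ℕ) :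
    ∑ I ∈ (Finset.powersetCard r (Finset.univ : Finset (Fin N))).attach,
        grothVal r lam
            (fun a =>
              1 - (z ((I.1.orderIsoOfFin (Finset.mem_powersetCard.mp I.2).2 a : Fin N)))⁻¹) *
          ∏ i ∈ I.1, (z i ^ ((N : ℤ) - (r : ℤ) + (d : ℤ)) / ∏ j ∈ I.1ᶜ, (z i - z j)) =
      genSchurFun N r
        (fun i w => w ^ d * (1 - w⁻¹) ^ (lam i + (r - 1 - (i : ℕ)))) z :=
  stmt2_general N r hrN z hz hz0 lam d
end

section
/- Let R be a commutative ring, let N ≥ r ≥ 1 and 0 ≤ m ≤ r be integers, let x_1,…,x_N ∈ R, and let t be an indeterminate. Define E : ℤ → R[t] by E(j) = e_j(x_1,…,x_N) for j ≠ r and E(r) = e_r(x_1,…,x_N) + t. For an integer d ≥ 0, let M be the (d+1)×(d+1) matrix over R[t] with entries M_{i,j} = E(r − i + j) for 1 ≤ i ≤ d and M_{d+1,j} = E(m − d − 1 + j), for 1 ≤ j ≤ d+1. Then the coefficient of t^d in det(M) equals e_m(x_1,…,x_N) if m < r, and equals (d+1)·e_r(x_1,…,x_N) if m = r. -/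
/-- The `j`-th elementary symmetric polynomial of `x_1,…,x_N`, indexed by `j : ℤ`
(it is `0` for `j < 0` or `j > N`, and `1` for `j = 0`). -/
def esymZ {R : Type*} [CommRing R] (N : ℕ) (x : Fin N → R) (j : ℤ) : R :=
  if 0 ≤ j then
    ∑ s ∈ Finset.powersetCard j.toNat (Finset.univ : Finset (Fin N)), ∏ i ∈ s, x i
  else 0

/-- `E : ℤ → R[t]` with `E(j) = e_j(x)` for `j ≠ r` and `E(r) = e_r(x) + t`. -/
noncomputable def Efun {R : Type*} [CommRing R] (N : ℕ) (x : Fin N → R) (r : ℕ)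
    (j : ℤ) : Polynomial R :=
  if j = (r : ℤ) then Polynomial.C (esymZ N x j) + Polynomial.X
  else Polynomial.C (esymZ N x j)

lemma Efun_natDegree_le {R : Type*} [CommRing R] (N : ℕ) (x : Fin N → R) (r : ℕ) (j : ℤ) :
    (Efun N x r j).natDegree ≤ 1 := by
  unfold Efun
  split
  · exact le_trans (Polynomial.natDegree_add_le _ _)
      (max_le (by simp) Polynomial.natDegree_X_le)
  · simp

lemma Efun_of_ne {R : Type*} [CommRing R] (N : ℕ) (x : Fin N → R) (r : ℕ) (j : ℤ)
    (h : j ≠ (r : ℤ)) : Efun N x r j = Polynomial.C (esymZ N x j) := by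
  simp [Efun, h]

/-- Let `M` be the `(d+1)×(d+1)` matrix over `R[t]` with
`M_{i,j} = E(r - i + j)` for `1 ≤ i ≤ d` and `M_{d+1,j} = E(m - d - 1 + j)`. Then the
coefficient of `t^d` in `det M` is `e_m(x)` if `m < r` and `(d+1)·e_r(x)` if `m = r`. -/
theorem stmt5 {R : Type*} [CommRing R] (N r m : ℕ) (hr : 1 ≤ r) (hrN : r ≤ N)
    (hm : m ≤ r) (x : Fin N → R) (d : ℕ) :
    (Matrix.det (Matrix.of fun i j : Fin (d + 1) =>
        if (i : ℕ) < d then Efun N x r ((r : ℤ) - ((i : ℕ) : ℤ) + ((j : ℕ) : ℤ))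
        else Efun N x r ((m : ℤ) - (d : ℤ) + ((j : ℕ) : ℤ)))).coeff d =
      if m < r then esymZ N x (m : ℤ) else ((d : R) + 1) * esymZ N x (r : ℤ) := by
  classical
  set M : Matrix (Fin (d+1)) (Fin (d+1)) (Polynomial R) :=
    Matrix.of fun i j : Fin (d + 1) =>
        if (i : ℕ) < d then Efun N x r ((r : ℤ) - ((i : ℕ) : ℤ) + ((j : ℕ) : ℤ))
        else Efun N x r ((m : ℤ) - (d : ℤ) + ((j : ℕ) : ℤ)) with hM
  -- every entry has degree ≤ 1
  have hdeg1 : ∀ a b : Fin (d+1), (M a b).natDegree ≤ 1 := by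
    intro a b
    simp only [hM, Matrix.of_apply]
    split <;> exact Efun_natDegree_le _ _ _ _
  -- entries off the fixed-point positions are constants
  have hoff : ∀ i j : Fin (d+1), j ≠ i → (M j i).natDegree = 0 := by
    intro i j hne
    have hne' : (j : ℕ) ≠ (i : ℕ) := fun h => hne (Fin.ext h)
    by_cases hj : (j : ℕ) < d
    · have : ((r : ℤ) - ((j : ℕ) : ℤ) + ((i : ℕ) : ℤ)) ≠ (r : ℤ) := by
        intro h; exact hne' (by omega)
      simp [hM, Matrix.of_apply, hj, Efun_of_ne _ _ _ _ this]
    · have hjd : (j : ℕ) = d := by omega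
      have hid : (i : ℕ) < d := by omega
      have : ((m : ℤ) - (d : ℤ) + ((i : ℕ) : ℤ)) ≠ (r : ℤ) := by omega
      simp [hM, Matrix.of_apply, hj, Efun_of_ne _ _ _ _ this]
  rw [Matrix.det_apply, Polynomial.finset_sum_coeff,
    Finset.sum_eq_single (1 : Equiv.Perm (Fin (d+1)))]
  · -- the identity permutation
    simp only [Equiv.Perm.sign_one, one_smul, Equiv.Perm.one_apply]
    have hprod : ∏ i : Fin (d+1), M i i =
        (Polynomial.X + Polynomial.C (esymZ N x (r : ℤ))) ^ d *
          Efun N x r ((m : ℤ) - (d : ℤ) + (d : ℤ)) := by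
      rw [Fin.prod_univ_castSucc]
      congr 1
      · have key : ∀ i : Fin d, M i.castSucc i.castSucc =
            Polynomial.X + Polynomial.C (esymZ N x (r : ℤ)) := by
          intro i
          have hi : ((i.castSucc : Fin (d+1)) : ℕ) < d := i.isLt
          have harg : ((r : ℤ) - (((i.castSucc : Fin (d+1)) : ℕ) : ℤ)
              + (((i.castSucc : Fin (d+1)) : ℕ) : ℤ)) = (r : ℤ) := by ring
          simp [hM, Matrix.of_apply, hi, harg, Efun, add_comm]
        rw [Finset.prod_congr rfl (fun i _ => key i), Finset.prod_const,
          Finset.card_univ, Fintype.card_fin]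
      · have : ¬ ((Fin.last d : Fin (d+1)) : ℕ) < d := by simp
        simp [hM, Matrix.of_apply, this]
    rw [hprod]
    have harg : ((m : ℤ) - (d : ℤ) + (d : ℤ)) = (m : ℤ) := by ring
    rw [harg]
    by_cases hmr : m < r
    · have hne : (m : ℤ) ≠ (r : ℤ) := by omega
      rw [Efun_of_ne _ _ _ _ hne, if_pos hmr, Polynomial.coeff_mul_C,
        Polynomial.coeff_X_add_C_pow]
      simp
    · have hmr' : m = r := by omega
      subst hmr'
      rw [if_neg hmr]
      have h1 : Efun N x m (m : ℤ) = Polynomial.X + Polynomial.C (esymZ N x (m : ℤ)) := by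
        simp [Efun, add_comm]
      rw [h1, ← pow_succ, Polynomial.coeff_X_add_C_pow]
      have h2 : d + 1 - d = 1 := by omega
      rw [h2, Nat.choose_succ_self_right, pow_one]
      push_cast
      ring
  · -- other permutations contribute 0
    intro σ _ hσ
    have hdeg : (∏ i : Fin (d+1), M (σ i) i).natDegree < d := by
      have hle : (∏ i : Fin (d+1), M (σ i) i).natDegree ≤
          ∑ i : Fin (d+1), (if σ i = i then 1 else 0) := by
        refine le_trans (Polynomial.natDegree_prod_le _ _) (Finset.sum_le_sum ?_)
        intro i _
        by_cases h : σ i = i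
        · rw [if_pos h]; exact hdeg1 _ _
        · rw [if_neg h]; exact le_of_eq (hoff i (σ i) h)
      have hsum : (∑ i : Fin (d+1), (if σ i = i then 1 else 0)) + σ.support.card = d + 1 := by
        have h1 : (∑ i : Fin (d+1), (if σ i = i then 1 else 0)) =
            ((Finset.univ : Finset (Fin (d+1))).filter fun i => σ i = i).card := by
          rw [Finset.card_filter]
        have h2 : σ.support = (Finset.univ : Finset (Fin (d+1))).filter fun i => ¬ σ i = i := by
          ext y; simp [Equiv.Perm.mem_support]
        rw [h1, h2, Finset.card_filter_add_card_filter_not,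
          Finset.card_univ, Fintype.card_fin]
      have hsupp : 2 ≤ σ.support.card := Equiv.Perm.one_lt_card_support_of_ne_one hσ
      omega
    rw [Units.smul_def, Polynomial.coeff_smul,
      Polynomial.coeff_eq_zero_of_natDegree_lt hdeg, smul_zero]
  · intro h; exact absurd (Finset.mem_univ _) h
end

section
/- Assume the roots setup with 1 ≤ r ≤ N. Let λ = (λ_1 ≥ … ≥ λ_r) be a partition with λ_r ≥ N, and let d ≥ 0 be an integer. Set g_i(z) = z^d (1 − z^{-1})^{λ_i + N + r − i} for 1 ≤ i ≤ r, and let F ∈ ℚ[T] be any polynomial with F(τ) = s_{(g_1,…,g_r)}(z_1,…,z_N). If d < r, then the coefficient of T^d in F is 0. If d ≥ r, then, setting f_i(z) = z^{d−r} (1 − z^{-1})^{λ_i + r − i}, for any polynomial F' ∈ ℚ[T] with F'(τ) = s_{(f_1,…,f_r)}(z_1,…,z_N), the coefficient of T^d in F equals the coefficient of T^{d−r} in F'. -/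
/-!
The roots satisfy `(1 - z⁻¹)^N z^r = (-1)^(r+1) τ`, so raising the exponent of `1 - z⁻¹` by `N`
multiplies each of the first `r` rows of the numerator by `(-1)^(r+1) τ`, and the Schur function
by `τ^r`; over `ℚ`, this is the periodicity `F = T^r F'`.

For `d < r` it remains to see that `T^r` divides `F`, i.e. that the Schur function on the
right is a rational function of `τ` without pole at `τ = 0`. Multiplying column `j` by a large
power of `z_j` turns the numerator into a determinant of polynomials in the `z_j`; reducing them
modulo `(X - 1)^N + (-1)^r T X^(N-r)`, which is monic over `ℚ[T]`, factors it as a matrix over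
`ℚ[T]` times the denominator. The factor `∏ z_j` introduced on the way is, by Vieta, a polynomial
in `τ` with constant term `1`.
-/

open Polynomial

namespace Polynomial

variable {R : Type*} [CommRing R]

theorem eval₂_eq_sum_coeff_modByMonic {S : Type*} [CommRing S] (φ : R →+* S) {P : R[X]}
    (hP : P.Monic) (q : R[X]) {x : S} (hx : P.eval₂ φ x = 0) :
    q.eval₂ φ x = ∑ k ∈ Finset.range P.natDegree, φ ((q %ₘ P).coeff k) * x ^ k := by
  by_cases hP1 : P = 1
  · have : Subsingleton S := subsingleton_of_zero_eq_one (by simpa [hP1] using hx.symm)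
    exact Subsingleton.elim _ _
  conv_lhs => rw [← modByMonic_add_div q P, eval₂_add, eval₂_mul, hx, zero_mul, add_zero]
  exact eval₂_eq_sum_range' φ (natDegree_modByMonic_lt q hP hP1) x

theorem det_eval₂_eq_map_det_mul {S : Type*} [CommRing S] {N : ℕ} (φ : R →+* S) {P : R[X]}
    (hP : P.Monic) (hPN : P.natDegree = N) {z : Fin N → S} (hz : ∀ j, P.eval₂ φ (z j) = 0)
    (q : Fin N → R[X]) :
    ∃ W : Matrix (Fin N) (Fin N) R,
      (Matrix.of fun i j => (q i).eval₂ φ (z j)).det =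
        φ W.det * (Matrix.of fun (i j : Fin N) => z j ^ (N - 1 - i : ℕ)).det := by
  refine ⟨Matrix.of fun i k : Fin N => (q i %ₘ P).coeff (N - 1 - k), ?_⟩
  rw [RingHom.map_det, ← Matrix.det_mul]
  congr 1
  ext i j
  rw [Matrix.of_apply, eval₂_eq_sum_coeff_modByMonic φ hP _ (hz j), hPN, Matrix.mul_apply,
    ← Finset.sum_range_reflect, ← Fin.sum_univ_eq_sum_range]
  rfl

theorem exists_prod_pow_mul_det_eq_map_det_mul {K : Type*} [Field K] {N : ℕ} (φ : R →+* K)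
    {P : R[X]} (hP : P.Monic) (hPN : P.natDegree = N) {z : Fin N → K}
    (hz : ∀ j, P.eval₂ φ (z j) = 0) (hz0 : ∀ j, z j ≠ 0) (k : Fin N → ℤ) (p : Fin N → R[X]) :
    ∃ (m : ℕ) (W : Matrix (Fin N) (Fin N) R),
      (∏ j, z j) ^ m * (Matrix.of fun i j => z j ^ k i * (p i).eval₂ φ (z j)).det =
        φ W.det * (Matrix.of fun (i j : Fin N) => z j ^ (N - 1 - i : ℕ)).det := by
  set m := ∑ i, (k i).natAbs
  have hkm : ∀ i, 0 ≤ k i + m := fun i => by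
    have : (k i).natAbs ≤ m :=
      Finset.single_le_sum (f := fun i => (k i).natAbs) (fun _ _ => Nat.zero_le _)
        (Finset.mem_univ i)
    omega
  obtain ⟨W, hW⟩ := det_eval₂_eq_map_det_mul φ hP hPN hz fun i => X ^ (k i + m).toNat * p i
  refine ⟨m, W, ?_⟩
  rw [← hW, ← Finset.prod_pow, ← Matrix.det_mul_row]
  congr 1
  ext i j
  simp only [Matrix.of_apply]
  rw [eval₂_mul, eval₂_X_pow, ← mul_assoc, ← zpow_natCast, ← zpow_natCast,
    Int.toNat_of_nonneg (hkm i), zpow_add₀ (hz0 j), mul_comm (z j ^ k i)]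

end Polynomial

/-- `x = D(τ) / c(τ)` with `c(0) ≠ 0`: the value at `τ` of a rational function over `R` that
has no pole at `0`. -/
def IsRegularAtZero (R : Type*) {K : Type*} [CommRing R] [Field K] [Algebra R K] (τ x : K) :
    Prop :=
  ∃ c D : R[X], c.coeff 0 ≠ 0 ∧ aeval τ c * x = aeval τ D

section Regularity

variable {R K : Type*} [CommRing R] [Field K] [Algebra R K]

theorem isRegularAtZero_div_of_mul_eq {τ x y : K} (c D : R[X]) (hc : c.coeff 0 ≠ 0)
    (h : aeval τ c * x = aeval τ D * y) : IsRegularAtZero R τ (x / y) := by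
  by_cases hy : y = 0
  · exact ⟨c, 0, hc, by simp [hy]⟩
  · exact ⟨c, D, hc, by rw [← mul_div_assoc, h, mul_div_cancel_right₀ _ hy]⟩

theorem IsRegularAtZero.X_pow_dvd [IsDomain R] {τ x : K} (hτ : Transcendental R τ)
    (hx : IsRegularAtZero R τ x) {F : R[X]} {n : ℕ} (hF : aeval τ F = τ ^ n * x) :
    X ^ n ∣ F := by
  obtain ⟨c, D, hc, hcx⟩ := hx
  have hFc : F * c = X ^ n * D := transcendental_iff_injective.mp hτ <| by
    rw [map_mul, map_mul, hF, map_pow, aeval_X, ← hcx]; ring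
  exact prime_X.pow_dvd_of_dvd_mul_right n (by rwa [X_dvd_iff]) ⟨D, hFc⟩

end Regularity

section RootsPoly

/-- `(X - 1)^N + (-1)^r T X^(N-r)`: the `X` inside `C` is the variable `T` of the coefficient
ring `R[T]`. -/
noncomputable def rootsPoly (R : Type*) [CommRing R] (N r : ℕ) : R[X][X] :=
  (X - C 1) ^ N + C ((-1) ^ r * X) * X ^ (N - r)

variable {R : Type*} [CommRing R] {N r : ℕ}

theorem degree_C_mul_X_pow_lt_degree_X_sub_C_pow [Nontrivial R] (hr : 0 < r) (hrN : r ≤ N)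
    (a b : R) : (C a * X ^ (N - r)).degree < ((X - C b) ^ N).degree := by
  rw [degree_eq_natDegree ((monic_X_sub_C b).pow N).ne_zero, (monic_X_sub_C b).natDegree_pow,
    natDegree_X_sub_C, mul_one]
  exact (degree_C_mul_X_pow_le _ _).trans_lt (by exact_mod_cast (by omega : N - r < N))

theorem rootsPoly_monic (hr : 0 < r) (hrN : r ≤ N) : (rootsPoly R N r).Monic := by
  nontriviality R
  exact ((monic_X_sub_C 1).pow N).add_of_left
    (degree_C_mul_X_pow_lt_degree_X_sub_C_pow hr hrN _ _)

theorem natDegree_rootsPoly [Nontrivial R] (hr : 0 < r) (hrN : r ≤ N) :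
    (rootsPoly R N r).natDegree = N := by
  rw [rootsPoly, natDegree_add_eq_left_of_degree_lt
    (degree_C_mul_X_pow_lt_degree_X_sub_C_pow hr hrN _ _), (monic_X_sub_C 1).natDegree_pow,
    natDegree_X_sub_C, mul_one]

theorem map_rootsPoly {K : Type*} [CommRing K] [Algebra R K] (τ : K) :
    (rootsPoly R N r).map (aeval τ).toRingHom =
      (X - C 1) ^ N + C ((-1) ^ r * τ) * X ^ (N - r) := by
  simp [rootsPoly]

end RootsPoly

section GenSchurFun

variable {K : Type*} [Field K] {N r : ℕ}

def genSchurMatrix (N r : ℕ) (f : Fin r → K → K) (z : Fin N → K) : Matrix (Fin N) (Fin N) K :=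
  Matrix.of fun i j =>
    (if h : (i : ℕ) < r then f ⟨i, h⟩ (z j) else 1) * z j ^ ((N : ℤ) - 1 - ((i : ℕ) : ℤ))

theorem genSchurFun_def (f : Fin r → K → K) (z : Fin N → K) :
    genSchurFun N r f z = (genSchurMatrix N r f z).det /
      (Matrix.of fun i j : Fin N => z j ^ ((N : ℤ) - 1 - ((i : ℕ) : ℤ))).det :=
  rfl

theorem genSchurFun_eq_pow_mul (hrN : r ≤ N) (c : K) {f g : Fin r → K → K} {z : Fin N → K}
    (hfg : ∀ i j, f i (z j) = c * g i (z j)) :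
    genSchurFun N r f z = c ^ r * genSchurFun N r g z := by
  have hrow : genSchurMatrix N r f z =
      Matrix.of fun (i j : Fin N) =>
        (if (i : ℕ) < r then c else 1) * genSchurMatrix N r g z i j := by
    ext i j
    by_cases h : (i : ℕ) < r <;> simp [genSchurMatrix, h, hfg, mul_assoc]
  rw [genSchurFun_def, genSchurFun_def, hrow, Matrix.det_mul_column, Finset.prod_ite,
    Finset.prod_const, Finset.prod_const_one, mul_one, Fin.card_filter_val_lt, min_eq_right hrN,
    mul_div_assoc]

theorem pow_mul_one_sub_inv_pow_add (hrN : r ≤ N) {τ w : K} (hw : w ≠ 0)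
    (hroot : (w - 1) ^ N + (-1) ^ r * τ * w ^ (N - r) = 0) (d a : ℕ) :
    w ^ d * (1 - w⁻¹) ^ (a + N) = (-1) ^ (r + 1) * τ * (w ^ ((d : ℤ) - r) * (1 - w⁻¹) ^ a) := by
  have hN : (1 - w⁻¹) ^ N * w ^ r = (-1) ^ (r + 1) * τ := by
    have h1 : (w - 1) ^ N = (-1) ^ (r + 1) * τ * w ^ (N - r) := by
      rw [pow_succ]; linear_combination hroot
    rw [show 1 - w⁻¹ = (w - 1) / w by field_simp, div_pow, h1, ← pow_sub_mul_pow w hrN]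
    field_simp
  rw [← hN, pow_add, zpow_sub₀ hw, zpow_natCast, zpow_natCast]
  field_simp

theorem zpow_mul_one_sub_inv_pow_mul_zpow {w : K} (hw : w ≠ 0) (e n : ℤ) (b : ℕ) :
    w ^ e * (1 - w⁻¹) ^ b * w ^ n = w ^ (e - b + n) * (w - 1) ^ b := by
  rw [zpow_add₀ hw, zpow_sub₀ hw, zpow_natCast, show 1 - w⁻¹ = (w - 1) / w by field_simp, div_pow]
  field_simp

end GenSchurFun

section Roots

variable {R K : Type*} [CommRing R] [Field K] [Algebra R K] {N r : ℕ} {τ : K} {z : Fin N → K}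

theorem exists_coeff_zero_eq_one_prod_eq_aeval
    (hroots : ∏ i, (X - C (z i)) = (X - C 1) ^ N + C ((-1) ^ r * τ) * X ^ (N - r)) :
    ∃ c : R[X], c.coeff 0 = 1 ∧ ∏ i, z i = aeval τ c := by
  refine ⟨1 + C ((-1) ^ (N + r) * 0 ^ (N - r)) * X, by simp, ?_⟩
  have h := congrArg (eval 0) hroots
  simp only [eval_prod, eval_sub, eval_X, eval_C, zero_sub, Finset.prod_neg, Finset.card_univ,
    Fintype.card_fin, eval_add, eval_pow, eval_mul] at h
  have hs : (-1 : K) ^ N * (-1) ^ N = 1 := by rw [← mul_pow]; norm_num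
  simp only [map_add, map_one, map_mul, aeval_X, map_pow, map_neg, map_zero]
  linear_combination (-1) ^ N * h - (∏ i, z i - 1) * hs

theorem ne_zero_of_prod_X_sub_C_eq [Nontrivial R] (hτ : Transcendental R τ)
    (hroots : ∏ i, (X - C (z i)) = (X - C 1) ^ N + C ((-1) ^ r * τ) * X ^ (N - r)) (j : Fin N) :
    z j ≠ 0 := by
  obtain ⟨c, hc, hprod⟩ := exists_coeff_zero_eq_one_prod_eq_aeval (R := R) hroots
  have hne : ∏ i, z i ≠ 0 := hprod ▸ fun h => hτ ⟨c, fun h0 => by simp [h0] at hc, h⟩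
  exact Finset.prod_ne_zero_iff.mp hne j (Finset.mem_univ j)

theorem sub_one_pow_add_eq_zero_of_prod_X_sub_C_eq
    (hroots : ∏ i, (X - C (z i)) = (X - C 1) ^ N + C ((-1) ^ r * τ) * X ^ (N - r)) (j : Fin N) :
    (z j - 1) ^ N + (-1) ^ r * τ * z j ^ (N - r) = 0 := by
  have h := congrArg (eval (z j)) hroots
  rw [eval_prod, Finset.prod_eq_zero (Finset.mem_univ j) (by simp)] at h
  simpa using h.symm

theorem eval₂_rootsPoly_eq_zero
    (hroots : ∏ i, (X - C (z i)) = (X - C 1) ^ N + C ((-1) ^ r * τ) * X ^ (N - r)) (j : Fin N) :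
    (rootsPoly R N r).eval₂ (aeval τ).toRingHom (z j) = 0 := by
  rw [← eval_map, map_rootsPoly, ← hroots, eval_prod]
  exact Finset.prod_eq_zero (Finset.mem_univ j) (by simp)

theorem genSchurFun_periodicity [Nontrivial R] (hrN : r ≤ N) (hτ : Transcendental R τ)
    (hroots : ∏ i, (X - C (z i)) = (X - C 1) ^ N + C ((-1) ^ r * τ) * X ^ (N - r))
    (d : ℕ) (a : Fin r → ℕ) :
    genSchurFun N r (fun i w => w ^ d * (1 - w⁻¹) ^ (a i + N)) z =
      τ ^ r * genSchurFun N r (fun i w => w ^ ((d : ℤ) - r) * (1 - w⁻¹) ^ a i) z := by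
  rw [genSchurFun_eq_pow_mul hrN ((-1) ^ (r + 1) * τ)
      (g := fun i w => w ^ ((d : ℤ) - r) * (1 - w⁻¹) ^ a i) fun i j =>
      pow_mul_one_sub_inv_pow_add hrN (ne_zero_of_prod_X_sub_C_eq hτ hroots j)
        (sub_one_pow_add_eq_zero_of_prod_X_sub_C_eq hroots j) d (a i),
    mul_pow, ← pow_mul, mul_comm (r + 1), (Nat.even_mul_succ_self r).neg_one_pow, one_mul]

theorem isRegularAtZero_genSchurFun [Nontrivial R] (hr : 0 < r) (hrN : r ≤ N)
    (hτ : Transcendental R τ)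
    (hroots : ∏ i, (X - C (z i)) = (X - C 1) ^ N + C ((-1) ^ r * τ) * X ^ (N - r))
    (e : ℤ) (a : Fin r → ℕ) :
    IsRegularAtZero R τ (genSchurFun N r (fun i w => w ^ e * (1 - w⁻¹) ^ a i) z) := by
  set b : Fin N → ℕ := fun i => if h : (i : ℕ) < r then a ⟨i, h⟩ else 0
  set k : Fin N → ℤ := fun i => (if (i : ℕ) < r then e - b i else 0) + ((N : ℤ) - 1 - (i : ℕ))
  have hz0 := ne_zero_of_prod_X_sub_C_eq hτ hroots
  obtain ⟨m, W, hW⟩ := exists_prod_pow_mul_det_eq_map_det_mul (aeval (R := R) τ).toRingHom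
    (rootsPoly_monic hr hrN) (natDegree_rootsPoly hr hrN) (eval₂_rootsPoly_eq_zero hroots) hz0
    k fun i => (X - C 1) ^ b i
  obtain ⟨c, hc, hprod⟩ := exists_coeff_zero_eq_one_prod_eq_aeval (R := R) hroots
  have hM : genSchurMatrix N r (fun i w => w ^ e * (1 - w⁻¹) ^ a i) z =
      Matrix.of fun i j =>
        z j ^ k i * ((X - C 1) ^ b i : R[X][X]).eval₂ (aeval τ).toRingHom (z j) := by
    ext i j
    by_cases h : (i : ℕ) < r
    · simp [genSchurMatrix, k, b, h, zpow_mul_one_sub_inv_pow_mul_zpow (hz0 j), eval₂_pow,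
        eval₂_sub, eval₂_X, eval₂_one]
    · simp [genSchurMatrix, k, b, h]
  have hV : (Matrix.of fun i j : Fin N => z j ^ ((N : ℤ) - 1 - ((i : ℕ) : ℤ))) =
      Matrix.of fun (i j : Fin N) => z j ^ (N - 1 - i : ℕ) := by
    ext i j
    rw [Matrix.of_apply, Matrix.of_apply, ← zpow_natCast]
    congr 1
    omega
  have hcm : (c ^ m).coeff 0 ≠ 0 := by
    rw [coeff_zero_eq_eval_zero, eval_pow, ← coeff_zero_eq_eval_zero, hc, one_pow]
    exact one_ne_zero
  rw [genSchurFun_def, hM, hV]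
  exact isRegularAtZero_div_of_mul_eq (c ^ m) W.det hcm (by rwa [map_pow, ← hprod])

end Roots

/-- Roots setup. For a partition `λ` with `λ_r ≥ N` and `d ≥ 0`, set
`g_i(z) = z^d (1 - z⁻¹)^{λ_i + N + r - i}` and let `F ∈ ℚ[T]` satisfy
`F(τ) = s_{(g_1,…,g_r)}(z)`. If `d < r` then the coefficient of `T^d` in `F` is `0`; if
`d ≥ r` then, for `f_i(z) = z^{d-r} (1 - z⁻¹)^{λ_i + r - i}` and any `F' ∈ ℚ[T]` with
`F'(τ) = s_{(f_1,…,f_r)}(z)`, the coefficient of `T^d` in `F` equals the coefficient of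
`T^{d-r}` in `F'`. -/
theorem stmt8 {K : Type*} [Field K] [CharZero K] (N r : ℕ) (hr : 1 ≤ r) (hrN : r ≤ N)
    (τ : K) (hτ : Transcendental ℚ τ)
    (z : Fin N → K)
    (hroots : ∏ i, (Polynomial.X - Polynomial.C (z i)) =
      (Polynomial.X - Polynomial.C (1 : K)) ^ N +
        Polynomial.C ((-1 : K) ^ r * τ) * Polynomial.X ^ (N - r))
    (lam : Fin r → ℕ)
    (d : ℕ) :
    ∀ F : Polynomial ℚ,
      Polynomial.aeval τ F =
        genSchurFun N r
          (fun i w => w ^ d * (1 - w⁻¹) ^ (lam i + N + (r - 1 - (i : ℕ)))) z →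
      (d < r → F.coeff d = 0) ∧
      (r ≤ d → ∀ F' : Polynomial ℚ,
        Polynomial.aeval τ F' =
          genSchurFun N r
            (fun i w => w ^ ((d : ℤ) - (r : ℤ)) * (1 - w⁻¹) ^ (lam i + (r - 1 - (i : ℕ)))) z →
        F.coeff d = F'.coeff (d - r)) := by
  intro F hF
  have hFτ : aeval τ F = τ ^ r * genSchurFun N r
      (fun i w => w ^ ((d : ℤ) - r) * (1 - w⁻¹) ^ (lam i + (r - 1 - (i : ℕ)))) z := by
    rw [hF, ← genSchurFun_periodicity hrN hτ hroots]
    simp only [Nat.add_right_comm]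
  have hdvd : X ^ r ∣ F := (isRegularAtZero_genSchurFun hr hrN hτ hroots _ _).X_pow_dvd hτ hFτ
  refine ⟨fun hd => X_pow_dvd_iff.mp hdvd d hd, fun hrd F' hF' => ?_⟩
  have hFF' : F = X ^ r * F' :=
    transcendental_iff_injective.mp hτ (by rw [hFτ, map_mul, map_pow, aeval_X, hF'])
  rw [hFF', coeff_X_pow_mul', if_pos hrd]
end

section
/- Let λ = (λ_1 ≥ λ_2 ≥ 0) and μ = (μ_1 ≥ μ_2 ≥ 0) be partitions with at most two parts and set m = min(λ_1 − λ_2, μ_1 − μ_2). Then the following identity holds in ℤ[x_1, x_2]: G_λ · G_μ = G_{λ+μ} + Σ_{i=1}^{m} ( G_{λ+μ+(−i,i)} − G_{λ+μ+(−i+1,i)} ), where λ+μ+(b_1,b_2) denotes componentwise addition (every index pair occurring on the right-hand side satisfies a_1 ≥ a_2 ≥ 0). -/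
open MvPolynomial

/-- Telescoping sum lemma. -/
private lemma tel {R : Type*} [CommRing R] (x y : R) (p q : ℕ) :
    ∀ m, m ≤ p →
      ∑ i ∈ Finset.Icc 1 m,
          (x - y) * (x ^ (p - i + 1) * y ^ (q + i) - y ^ (p - i + 1) * x ^ (q + i))
        = (x ^ (p + 1) * y ^ (q + 1) + x ^ (q + 1) * y ^ (p + 1))
          - (x ^ (p - m + 1) * y ^ (q + m + 1) + x ^ (q + m + 1) * y ^ (p - m + 1)) := by
  intro m
  induction m with
  | zero => intro _; simp
  | succ n ih =>
      intro h
      rw [Finset.sum_Icc_succ_top (by omega : 1 ≤ n + 1), ih (by omega)]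
      have h1 : p - (n + 1) + 1 = p - n := by omega
      have h2 : q + (n + 1) = q + n + 1 := by omega
      rw [h1, h2]
      ring

/-- Rank-2 Littlewood–Richardson rule for stable Grothendieck
polynomials. For `a = (a_1 ≥ a_2 ≥ 0)`, `G_a ∈ ℤ[x_1,x_2]` is the (unique) polynomial
with `(x_1 - x_2)·G_a = x_1^{a_1+1} x_2^{a_2} (1-x_2) - x_2^{a_1+1} x_1^{a_2} (1-x_1)`.
Then for partitions `λ, μ` with at most two parts and `m = min(λ_1-λ_2, μ_1-μ_2)`,
`G_λ·G_μ = G_{λ+μ} + Σ_{i=1}^m (G_{λ+μ+(-i,i)} - G_{λ+μ+(-i+1,i)})`. -/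
theorem stmt9 (lam1 lam2 mu1 mu2 : ℕ) (hlam : lam2 ≤ lam1) (hmu : mu2 ≤ mu1)
    (G : ℕ → ℕ → MvPolynomial (Fin 2) ℤ)
    (hG : ∀ a1 a2 : ℕ, a2 ≤ a1 →
      (X 0 - X 1) * G a1 a2 =
        X 0 ^ (a1 + 1) * X 1 ^ a2 * (1 - X 1) - X 1 ^ (a1 + 1) * X 0 ^ a2 * (1 - X 0)) :
    G lam1 lam2 * G mu1 mu2 =
      G (lam1 + mu1) (lam2 + mu2) +
        ∑ i ∈ Finset.Icc 1 (min (lam1 - lam2) (mu1 - mu2)),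
          (G (lam1 + mu1 - i) (lam2 + mu2 + i) - G (lam1 + mu1 - i + 1) (lam2 + mu2 + i)) := by
  have hD : (X 0 - X 1 : MvPolynomial (Fin 2) ℤ) ≠ 0 := by
    intro h
    have h2 := congrArg (eval (fun i : Fin 2 => if i = 0 then (1 : ℤ) else 0)) h
    simp at h2
  apply mul_left_cancel₀ hD
  apply mul_left_cancel₀ hD
  have hsum : ∑ i ∈ Finset.Icc 1 (min (lam1 - lam2) (mu1 - mu2)),
      (X 0 - X 1 : MvPolynomial (Fin 2) ℤ) * ((X 0 - X 1) *
        (G (lam1 + mu1 - i) (lam2 + mu2 + i) - G (lam1 + mu1 - i + 1) (lam2 + mu2 + i)))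
      = (1 - X 0) * (1 - X 1) *
        ∑ i ∈ Finset.Icc 1 (min (lam1 - lam2) (mu1 - mu2)),
          (X 0 - X 1) * (X 0 ^ (lam1 + mu1 - i + 1) * X 1 ^ (lam2 + mu2 + i)
            - X 1 ^ (lam1 + mu1 - i + 1) * X 0 ^ (lam2 + mu2 + i)) := by
    rw [Finset.mul_sum]
    refine Finset.sum_congr rfl fun i hi => ?_
    simp only [Finset.mem_Icc, le_min_iff] at hi
    have ea := hG (lam1 + mu1 - i) (lam2 + mu2 + i) (by omega)
    have eb := hG (lam1 + mu1 - i + 1) (lam2 + mu2 + i) (by omega)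
    have hsplit : (X 0 - X 1 : MvPolynomial (Fin 2) ℤ) * ((X 0 - X 1) *
        (G (lam1 + mu1 - i) (lam2 + mu2 + i) - G (lam1 + mu1 - i + 1) (lam2 + mu2 + i)))
        = (X 0 - X 1) * ((X 0 - X 1) * G (lam1 + mu1 - i) (lam2 + mu2 + i))
          - (X 0 - X 1) * ((X 0 - X 1) * G (lam1 + mu1 - i + 1) (lam2 + mu2 + i)) := by
      ring
    rw [hsplit, ea, eb]
    ring
  have expand : (X 0 - X 1 : MvPolynomial (Fin 2) ℤ) * ((X 0 - X 1) *
      (G (lam1 + mu1) (lam2 + mu2) + ∑ i ∈ Finset.Icc 1 (min (lam1 - lam2) (mu1 - mu2)),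
        (G (lam1 + mu1 - i) (lam2 + mu2 + i) - G (lam1 + mu1 - i + 1) (lam2 + mu2 + i))))
      = (X 0 - X 1) * ((X 0 - X 1) * G (lam1 + mu1) (lam2 + mu2))
        + ∑ i ∈ Finset.Icc 1 (min (lam1 - lam2) (mu1 - mu2)),
          (X 0 - X 1) * ((X 0 - X 1) *
            (G (lam1 + mu1 - i) (lam2 + mu2 + i) - G (lam1 + mu1 - i + 1) (lam2 + mu2 + i))) := by
    rw [mul_add, mul_add, Finset.mul_sum, Finset.mul_sum]
  have htel := tel (X 0 : MvPolynomial (Fin 2) ℤ) (X 1) (lam1 + mu1) (lam2 + mu2)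
      (min (lam1 - lam2) (mu1 - mu2)) (by omega)
  have hL : (X 0 - X 1 : MvPolynomial (Fin 2) ℤ) * ((X 0 - X 1) * (G lam1 lam2 * G mu1 mu2))
      = ((X 0 - X 1) * G lam1 lam2) * ((X 0 - X 1) * G mu1 mu2) := by ring
  rw [expand, hsum, htel, hG (lam1 + mu1) (lam2 + mu2) (by omega), hL,
    hG lam1 lam2 hlam, hG mu1 mu2 hmu]
  rcases le_total (lam1 - lam2) (mu1 - mu2) with h | h
  · rw [min_eq_left h]
    have e1 : lam1 + mu1 - (lam1 - lam2) = lam2 + mu1 := by omega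
    have e2 : lam2 + mu2 + (lam1 - lam2) = lam1 + mu2 := by omega
    rw [e1, e2]; ring
  · rw [min_eq_right h]
    have e1 : lam1 + mu1 - (mu1 - mu2) = lam1 + mu2 := by omega
    have e2 : lam2 + mu2 + (mu1 - mu2) = lam2 + mu1 := by omega
    rw [e1, e2]; ring
end

section
/- Assume the rank-2 roots setup. Let λ = (λ_1 ≥ λ_2 ≥ 0) be a partition with 2k+2 < λ_1 ≤ 3k+1. For an integer d ≥ 0, set f_1(z) = z^d (1 − z^{-1})^{λ_1 + 1} and f_2(z) = z^d (1 − z^{-1})^{λ_2}, and let c_d denote the coefficient of T^d in any polynomial F ∈ ℚ[T] with F(τ) = s_{(f_1,f_2)}(z_1,…,z_N). If λ_2 < 2N, then c_d = 0 for d ≤ 2 and c_d = 1 for d ≥ 3; if λ_2 ≥ 2N, then c_d = 0 for d ≤ 3 and c_d = 1 for d ≥ 4. -/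
/-- `s_{(f_1,f_2)}(z_1,…,z_N)` for `f_1(z) = z^d (1-z⁻¹)^{λ_1+1}`,
`f_2(z) = z^d (1-z⁻¹)^{λ_2}`. -/
noncomputable def svalRank2 {K : Type*} [Field K] (N : ℕ) (z : Fin N → K)
    (lam1 lam2 d : ℕ) : K :=
  genSchurFun N 2
    ![fun w => w ^ d * (1 - w⁻¹) ^ (lam1 + 1), fun w => w ^ d * (1 - w⁻¹) ^ lam2] z

open Polynomial

namespace Rank2Quot

theorem coeff_mul_of_weight {R : Type*} [Semiring R] {f g : R[X]} {j₁ j₂ m₁ m₂ x y : ℕ}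
    (hf : ∀ e, m₁ < j₁ + 2 * e → f.coeff e = 0) (hg : ∀ e, m₂ < j₂ + 2 * e → g.coeff e = 0)
    (hx : j₁ + 2 * x = m₁) (hy : j₂ + 2 * y = m₂) :
    (f * g).coeff (x + y) = f.coeff x * g.coeff y := by
  rw [coeff_mul, Finset.sum_eq_single (x, y) _ (by simp)]
  rintro ⟨x', y'⟩ hxy hne
  rw [Finset.HasAntidiagonal.mem_antidiagonal] at hxy
  by_cases h : x < x'
  · rw [hf x' (by omega), zero_mul]
  · rw [hg y' (by grind), mul_zero]

theorem coeff_mul_eq_zero_of_weight {R : Type*} [Semiring R] {f g : R[X]} {j₁ j₂ m₁ m₂ E : ℕ}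
    (hf : ∀ e, m₁ < j₁ + 2 * e → f.coeff e = 0) (hg : ∀ e, m₂ < j₂ + 2 * e → g.coeff e = 0)
    (hE : m₁ + m₂ ≤ j₁ + j₂ + 2 * E) (hsplit : ∀ x ≤ E, j₁ + 2 * x ≠ m₁) :
    (f * g).coeff E = 0 := by
  rw [coeff_mul]
  refine Finset.sum_eq_zero fun ⟨x, y⟩ hxy => ?_
  rw [Finset.HasAntidiagonal.mem_antidiagonal] at hxy
  have := hsplit x (by omega)
  by_cases h : m₁ < j₁ + 2 * x
  · rw [hf x h, zero_mul]
  · rw [hg y (by omega), mul_zero]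

theorem sum_range_choose_mul_pow {R : Type*} [CommSemiring R] (x : R) {n m : ℕ} (h : n < m) :
    ∑ j ∈ Finset.range m, (n.choose j : R) * x ^ j = (x + 1) ^ n := by
  rw [add_pow, ← Finset.sum_subset (Finset.range_subset_range.2 h)]
  · exact Finset.sum_congr rfl fun j _ => by ring
  · intro j _ hj
    rw [Nat.choose_eq_zero_of_lt (by simpa using hj), Nat.cast_zero, zero_mul]

theorem coeff_X_sub_C_one_pow {R : Type*} [CommRing R] (i c : ℕ) :
    ((X - C 1 : R[X]) ^ i).coeff c = (-1) ^ (i - c) * i.choose c := by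
  rw [sub_eq_add_neg, ← C_neg, coeff_X_add_C_pow]

theorem coeff_neg_X_pow_mul {R : Type*} [CommRing R] (f : R[X]) (m d : ℕ) :
    ((-X) ^ m * f).coeff d = if m ≤ d then (-1) ^ m * f.coeff (d - m) else 0 := by
  rw [neg_pow, mul_assoc, show ((-1) ^ m : R[X]) = C ((-1) ^ m) by simp, coeff_C_mul,
    coeff_X_pow_mul']
  split_ifs <;> simp

theorem sum_coeff_mul_pow_rev {R : Type*} [Semiring R] {m : ℕ} {f : R[X]} (hf : f.natDegree < m)
    (y : R) : ∑ c : Fin m, f.coeff (m - 1 - c) * y ^ (m - 1 - c) = f.eval y := by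
  rw [eval_eq_sum_range' hf, ← Finset.sum_range_reflect,
    Fin.sum_univ_eq_sum_range (fun c => f.coeff (m - 1 - c) * y ^ (m - 1 - c))]

def topMinor {R : Type*} [CommRing R] (n : ℕ) (p q : R[X]) : R :=
  p.coeff (n + 1) * q.coeff n - p.coeff n * q.coeff (n + 1)

theorem coeff_sum_C_mul_X_sub_C_one_pow {R : Type*} [CommRing R] (c : ℕ → R) (n : ℕ) :
    (∑ j ∈ Finset.range (n + 2), C (c j) * (X - C 1) ^ j).coeff (n + 1) = c (n + 1) ∧
    (∑ j ∈ Finset.range (n + 2), C (c j) * (X - C 1) ^ j).coeff n = c n - (n + 1) * c (n + 1) := by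
  simp only [Finset.sum_range_succ _ (n + 1), Finset.sum_range_succ _ n, coeff_add,
    finsetSum_coeff, coeff_C_mul, coeff_X_sub_C_one_pow]
  have hlow : ∀ i, n ≤ i → ∑ j ∈ Finset.range n, c j * ((-1) ^ (j - i) * (j.choose i : R)) = 0 :=
    fun i hi => Finset.sum_eq_zero fun j hj => by
      rw [Nat.choose_eq_zero_of_lt (by rw [Finset.mem_range] at hj; omega)]
      simp
  rw [hlow n le_rfl, hlow (n + 1) (by omega), Nat.choose_eq_zero_of_lt (by omega : n < n + 1),
    Nat.choose_self, Nat.choose_self, Nat.choose_succ_self_right, show n + 1 - n = 1 by omega,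
    Nat.sub_self n, Nat.sub_self (n + 1), Nat.sub_eq_zero_of_le (by omega : n ≤ n + 1)]
  constructor
  · simp
  · push_cast
    ring

theorem topMinor_sum_C_mul_X_sub_C_one_pow {R : Type*} [CommRing R] (c d : ℕ → R) (n : ℕ) :
    topMinor n (∑ j ∈ Finset.range (n + 2), C (c j) * (X - C 1) ^ j)
      (∑ j ∈ Finset.range (n + 2), C (d j) * (X - C 1) ^ j) =
      c (n + 1) * d n - c n * d (n + 1) := by
  obtain ⟨hc₁, hc₀⟩ := coeff_sum_C_mul_X_sub_C_one_pow c n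
  obtain ⟨hd₁, hd₀⟩ := coeff_sum_C_mul_X_sub_C_one_pow d n
  rw [topMinor, hc₁, hc₀, hd₁, hd₀]
  ring

theorem topMinor_C_mul_map {R S : Type*} [CommRing R] [CommRing S] (f : R →+* S) (a b : S)
    (n : ℕ) (p q : R[X]) :
    topMinor n (C a * p.map f) (C b * q.map f) = a * b * f (topMinor n p q) := by
  simp only [topMinor, coeff_C_mul, coeff_map, map_sub, map_mul]
  ring

theorem det_eq_topMinor_mul_det {R : Type*} [CommRing R] (n : ℕ) (z : Fin (2 + n) → R)
    {p q : R[X]} (hp : p.natDegree < 2 + n) (hq : q.natDegree < 2 + n) :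
    (Matrix.of fun i j : Fin (2 + n) => if (i : ℕ) = 0 then p.eval (z j)
        else if (i : ℕ) = 1 then q.eval (z j) else z j ^ (2 + n - 1 - i)).det =
      topMinor n p q * (Matrix.of fun i j : Fin (2 + n) => z j ^ (2 + n - 1 - i)).det := by
  let A : Matrix (Fin (2 + n)) (Fin (2 + n)) R := Matrix.of fun i c =>
    if (i : ℕ) = 0 then p.coeff (2 + n - 1 - c) else if (i : ℕ) = 1 then q.coeff (2 + n - 1 - c)
      else if i = c then 1 else 0
  have hM : (Matrix.of fun i j : Fin (2 + n) => if (i : ℕ) = 0 then p.eval (z j)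
        else if (i : ℕ) = 1 then q.eval (z j) else z j ^ (2 + n - 1 - i)) =
      A * Matrix.of fun i j : Fin (2 + n) => z j ^ (2 + n - 1 - i) := by
    ext i j
    simp only [Matrix.mul_apply, Matrix.of_apply, A]
    split_ifs
    · exact (sum_coeff_mul_pow_rev hp _).symm
    · exact (sum_coeff_mul_pow_rev hq _).symm
    · rw [Finset.sum_eq_single i (fun c _ hc => by rw [if_neg (Ne.symm hc), zero_mul])
        (by simp), if_pos rfl, one_mul]
  have hl : ∀ r, ((finSumFinEquiv (Sum.inl r) : Fin (2 + n)) : ℕ) = r := fun _ => rfl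
  have hr : ∀ r, ((finSumFinEquiv (Sum.inr r) : Fin (2 + n)) : ℕ) = 2 + r := fun _ => rfl
  have hA : A.submatrix finSumFinEquiv finSumFinEquiv = Matrix.fromBlocks
      !![p.coeff (n + 1), p.coeff n; q.coeff (n + 1), q.coeff n]
      (Matrix.of fun r c => A (finSumFinEquiv (Sum.inl r)) (finSumFinEquiv (Sum.inr c))) 0 1 := by
    ext (r | r) (c | c)
    · simp only [Matrix.submatrix_apply, Matrix.fromBlocks_apply₁₁, Matrix.of_apply, A, hl]
      fin_cases r <;> fin_cases c <;> simp [show 2 + n - 1 = n + 1 by omega]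
    · rfl
    · simp only [Matrix.submatrix_apply, Matrix.fromBlocks_apply₂₁, Matrix.of_apply, A, hl, hr,
        Matrix.zero_apply, ← Fin.val_inj]
      split_ifs <;> first | rfl | omega
    · simp only [Matrix.submatrix_apply, Matrix.fromBlocks_apply₂₂, Matrix.of_apply, A, hr,
        Matrix.one_apply, ← Fin.val_inj]
      split_ifs <;> first | rfl | omega
  rw [hM, Matrix.det_mul, ← Matrix.det_submatrix_equiv_self finSumFinEquiv A, hA,
    Matrix.det_fromBlocks_zero₂₁, Matrix.det_one, mul_one, Matrix.det_fin_two_of, topMinor]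

theorem det_pow_rev_ne_zero {K : Type*} [Field K] {m : ℕ} {z : Fin m → K}
    (hz : Function.Injective z) : (Matrix.of fun i j : Fin m => z j ^ (m - 1 - i)).det ≠ 0 := by
  have hrev : (Matrix.of fun i j : Fin m => z j ^ (m - 1 - i)) =
      (Matrix.vandermonde z).transpose.submatrix Fin.revPerm id := by
    ext i j
    simp only [Matrix.of_apply, Matrix.submatrix_apply, Matrix.transpose_apply,
      Matrix.vandermonde_apply, Fin.revPerm_apply, Fin.val_rev, id]
    congr 1
    omega
  rw [hrev, Matrix.det_permute, Matrix.det_transpose]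
  refine mul_ne_zero ?_ (Matrix.det_vandermonde_ne_zero_iff.2 hz)
  rcases Int.units_eq_one_or (Equiv.Perm.sign (Fin.revPerm : Equiv.Perm (Fin m))) with h | h <;>
    simp [h]

theorem zpow_sub_one_sub {K : Type*} [DivisionRing K] (y : K) {m : ℕ} (i : Fin m) :
    y ^ ((m : ℤ) - 1 - ((i : ℕ) : ℤ)) = y ^ (m - 1 - i) := by
  rw [← zpow_natCast]
  congr 1
  omega

theorem genSchurFun_two_eq_topMinor {K : Type*} [Field K] {N : ℕ} (hN : 2 ≤ N) {z : Fin N → K}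
    (hz : Function.Injective z) (f : Fin 2 → K → K) {p q : K[X]} (hp : p.natDegree < N)
    (hq : q.natDegree < N) (hfp : ∀ j, f 0 (z j) * z j ^ (N - 1) = p.eval (z j))
    (hfq : ∀ j, f 1 (z j) * z j ^ (N - 2) = q.eval (z j)) :
    genSchurFun N 2 f z = topMinor (N - 2) p q := by
  obtain ⟨n, rfl⟩ : ∃ n, N = 2 + n := ⟨N - 2, by omega⟩
  simp only [genSchurFun, zpow_sub_one_sub]
  rw [Nat.add_sub_cancel_left, div_eq_iff (det_pow_rev_ne_zero hz),
    ← det_eq_topMinor_mul_det n z hp hq]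
  congr 1
  ext i j
  rcases i with ⟨_ | _ | i, hi⟩
  · simpa using hfp j
  · simpa [show 2 + n - 1 - 1 = 2 + n - 2 by omega] using hfq j
  · simp

section Reduction

variable {N : ℕ}

/-- The inner variable `X : ℚ[X]` plays the role of `T`, which is later specialised to `τ`. -/
noncomputable def relPoly (N : ℕ) : ℚ[X][X] := (X - C 1) ^ N + C X * X ^ (N - 2)

theorem degree_C_X_mul_X_pow_lt (hN : 1 ≤ N) :
    (C X * X ^ (N - 2) : ℚ[X][X]).degree < ((X - C 1) ^ N : ℚ[X][X]).degree := by
  rw [degree_pow, degree_X_sub_C, nsmul_one]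
  exact (degree_C_mul_X_pow_le _ _).trans_lt (by exact_mod_cast (by omega : N - 2 < N))

theorem monic_relPoly (hN : 1 ≤ N) : (relPoly N).Monic :=
  ((monic_X_sub_C 1).pow N).add_of_left (degree_C_X_mul_X_pow_lt hN)

theorem natDegree_relPoly (hN : 1 ≤ N) : (relPoly N).natDegree = N := by
  rw [relPoly, natDegree_add_eq_left_of_degree_lt (degree_C_X_mul_X_pow_lt hN), natDegree_pow,
    natDegree_X_sub_C, mul_one]

theorem coeff_zero_relPoly (hN : 3 ≤ N) : (relPoly N).coeff 0 = (-1) ^ N := by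
  rw [coeff_zero_eq_eval_zero]
  simp [relPoly, zero_pow (show N - 2 ≠ 0 by omega)]

/-- The coefficient of `(X - 1) ^ j` in the remainder of `(X - 1) ^ b * X ^ p` modulo
`relPoly N`: multiplying by `X = (X - 1) + 1` shifts the coefficients, and the overflow
`(X - 1) ^ N` becomes `-T * X ^ (N - 2) = -T * ∑ j, (N - 2).choose j * (X - 1) ^ j`. -/
noncomputable def redCoeff (N b : ℕ) : ℕ → ℕ → ℚ[X]
  | 0, j => if j = b then 1 else 0
  | p + 1, j => redCoeff N b p j + (if j = 0 then 0 else redCoeff N b p (j - 1))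
      - C ((N - 2).choose j : ℚ) * (X * redCoeff N b p (N - 1))

def topWeightCoeff (N j e : ℕ) : ℚ := if N - 2 ≤ j then (-1) ^ e else if e = 0 then 1 else 0

section Weight

variable {b : ℕ}

theorem coeff_redCoeff_succ (p j e : ℕ) :
    (redCoeff N b (p + 1) j).coeff e = (redCoeff N b p j).coeff e
      + (if j = 0 then 0 else (redCoeff N b p (j - 1)).coeff e)
      - (N - 2).choose j * (if e = 0 then 0 else (redCoeff N b p (N - 1)).coeff (e - 1)) := by
  rw [redCoeff, coeff_sub, coeff_add, coeff_C_mul, apply_ite (coeff · e), coeff_zero]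
  rcases e with _ | e
  · simp
  · simp [coeff_X_mul]

theorem coeff_redCoeff_eq_zero (hN : 2 ≤ N) (hb : b < N) :
    ∀ p j e, j < N → p + b < j + 2 * e → (redCoeff N b p j).coeff e = 0
  | 0, j, e, _, h => by
    rw [redCoeff]
    split_ifs with hj
    · rw [coeff_one, if_neg (by omega)]
    · rw [coeff_zero]
  | p + 1, j, e, hj, h => by
    have IH := coeff_redCoeff_eq_zero hN hb p
    have hprev : (if j = 0 then 0 else (redCoeff N b p (j - 1)).coeff e) = 0 := by
      split_ifs
      · rfl
      · exact IH _ _ (by omega) (by omega)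
    have hover : ((N - 2).choose j : ℚ) *
        (if e = 0 then 0 else (redCoeff N b p (N - 1)).coeff (e - 1)) = 0 := by
      by_cases he : e = 0
      · rw [if_pos he, mul_zero]
      by_cases hjN : j ≤ N - 2
      · rw [if_neg he, IH (N - 1) (e - 1) (by omega) (by omega), mul_zero]
      · rw [Nat.choose_eq_zero_of_lt (by omega), Nat.cast_zero, zero_mul]
    rw [coeff_redCoeff_succ, IH j e hj (by omega), hprev, hover]
    ring

theorem coeff_redCoeff_of_weight_eq (hN : 2 ≤ N) (hb : b < N) :
    ∀ p j e, j < N → j + 2 * e = p + b → (redCoeff N b p j).coeff e = topWeightCoeff N j e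
  | 0, j, e, _, h => by
    rw [redCoeff, topWeightCoeff]
    rcases Nat.eq_zero_or_pos e with rfl | he
    · simp [show j = b by omega]
    · simp [show j ≠ b by omega, show ¬ N - 2 ≤ j by omega, he.ne']
  | p + 1, j, e, hj, h => by
    have IH := coeff_redCoeff_of_weight_eq hN hb p
    rw [coeff_redCoeff_succ, coeff_redCoeff_eq_zero hN hb p j e hj (by omega), zero_add]
    rcases Nat.eq_zero_or_pos e with rfl | he
    · rw [if_neg (by omega), IH (j - 1) 0 (by omega) (by omega)]
      simp [topWeightCoeff]
    have hprev : (if j = 0 then 0 else (redCoeff N b p (j - 1)).coeff e) =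
        if N - 1 ≤ j then (-1) ^ e else 0 := by
      split_ifs with h0 h1 h1
      · omega
      · rfl
      · rw [IH _ _ (by omega) (by omega), topWeightCoeff, if_pos (by omega)]
      · rw [IH _ _ (by omega) (by omega), topWeightCoeff, if_neg (by omega), if_neg he.ne']
    rw [hprev, if_neg he.ne', topWeightCoeff, if_neg he.ne']
    rcases lt_trichotomy j (N - 2) with hj' | rfl | hj'
    · rw [coeff_redCoeff_eq_zero hN hb p _ _ (by omega) (by omega)]
      simp [show ¬ N - 1 ≤ j by omega, show ¬ N - 2 ≤ j by omega]
    · rw [IH (N - 1) (e - 1) (by omega) (by omega), topWeightCoeff, Nat.choose_self,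
        if_neg (show ¬ N - 1 ≤ N - 2 by omega), if_pos (show N - 2 ≤ N - 1 by omega),
        if_pos le_rfl]
      rw [show e = e - 1 + 1 by omega, pow_succ]
      simp
    · rw [Nat.choose_eq_zero_of_lt (by omega)]
      simp [show N - 1 ≤ j by omega, show N - 2 ≤ j by omega]

theorem coeff_redCoeff_mul_redCoeff {b₁ b₂ q₁ q₂ j₁ j₂ E : ℕ} (hN : 2 ≤ N) (hb₁ : b₁ < N)
    (hb₂ : b₂ < N) (hj₁ : N - 2 ≤ j₁) (hj₁N : j₁ < N) (hj₂ : N - 2 ≤ j₂) (hj₂N : j₂ < N)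
    (hE : j₁ + j₂ + 2 * E = b₁ + q₁ + (b₂ + q₂)) :
    (redCoeff N b₁ q₁ j₁ * redCoeff N b₂ q₂ j₂).coeff E =
      if j₁ ≤ b₁ + q₁ ∧ j₂ ≤ b₂ + q₂ ∧ (b₁ + q₁ - j₁) % 2 = 0 then (-1) ^ E else 0 := by
  have hf := fun e => coeff_redCoeff_eq_zero hN hb₁ q₁ j₁ e hj₁N
  have hg := fun e => coeff_redCoeff_eq_zero hN hb₂ q₂ j₂ e hj₂N
  split_ifs with h
  · obtain ⟨x, hx⟩ : ∃ x, j₁ + 2 * x = q₁ + b₁ := ⟨(b₁ + q₁ - j₁) / 2, by omega⟩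
    obtain ⟨y, hy⟩ : ∃ y, j₂ + 2 * y = q₂ + b₂ := ⟨(b₂ + q₂ - j₂) / 2, by omega⟩
    rw [show E = x + y by omega, coeff_mul_of_weight hf hg hx hy,
      coeff_redCoeff_of_weight_eq hN hb₁ q₁ j₁ x hj₁N hx,
      coeff_redCoeff_of_weight_eq hN hb₂ q₂ j₂ y hj₂N hy, topWeightCoeff, topWeightCoeff,
      if_pos hj₁, if_pos hj₂, pow_add]
  · exact coeff_mul_eq_zero_of_weight hf hg (by omega) fun x _ _ => h (by omega)

end Weight

noncomputable def redPoly (N b p : ℕ) : ℚ[X][X] :=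
  ∑ j ∈ Finset.range N, C (redCoeff N b p j) * (X - C 1) ^ j

theorem redPoly_zero {b : ℕ} (hb : b < N) : redPoly N b 0 = (X - C 1) ^ b := by
  rw [redPoly, Finset.sum_eq_single_of_mem b (Finset.mem_range.2 hb)]
  · simp [redCoeff]
  · intro j _ hj
    simp [redCoeff, hj]

theorem X_mul_redPoly (hN : 2 ≤ N) (b p : ℕ) :
    X * redPoly N b p = redPoly N b (p + 1) + C (redCoeff N b p (N - 1)) * relPoly N := by
  obtain ⟨n, rfl⟩ : ∃ n, N = n + 2 := ⟨N - 2, by omega⟩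
  set c := redCoeff (n + 2) b p with hc
  have hbinom : ∑ j ∈ Finset.range (n + 2), (n.choose j : ℚ[X][X]) * (X - C 1) ^ j = X ^ n := by
    rw [sum_range_choose_mul_pow _ (by omega), C_1, sub_add_cancel]
  have hshift : ∑ j ∈ Finset.range (n + 2), C (if j = 0 then 0 else c (j - 1)) * (X - C 1) ^ j =
      ∑ j ∈ Finset.range (n + 1), C (c j) * (X - C 1) ^ (j + 1) := by
    rw [Finset.sum_range_succ']
    simp
  have hnext : redPoly (n + 2) b (p + 1) =
      ∑ j ∈ Finset.range (n + 2), C (c j) * (X - C 1) ^ j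
        + ∑ j ∈ Finset.range (n + 2), C (if j = 0 then 0 else c (j - 1)) * (X - C 1) ^ j
        - C (X * c (n + 1)) *
          ∑ j ∈ Finset.range (n + 2), (n.choose j : ℚ[X][X]) * (X - C 1) ^ j := by
    simp only [redPoly, redCoeff, Finset.mul_sum, ← Finset.sum_add_distrib,
      ← Finset.sum_sub_distrib]
    refine Finset.sum_congr rfl fun j _ => ?_
    simp only [map_sub, map_add, map_mul, map_natCast, ← hc, Nat.add_sub_cancel,
      show n + 2 - 1 = n + 1 by omega]
    ring
  have hX : X * redPoly (n + 2) b p =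
      ∑ j ∈ Finset.range (n + 1), C (c j) * (X - C 1) ^ (j + 1)
        + C (c (n + 1)) * (X - C 1) ^ (n + 2)
        + ∑ j ∈ Finset.range (n + 2), C (c j) * (X - C 1) ^ j := by
    rw [← Finset.sum_range_succ (fun j => C (c j) * (X - C 1) ^ (j + 1)), ← Finset.sum_add_distrib,
      redPoly, Finset.mul_sum, ← hc]
    refine Finset.sum_congr rfl fun j _ => ?_
    rw [C_1]
    ring
  rw [hX, hnext, hbinom, hshift, relPoly, show n + 2 - 1 = n + 1 by omega,
    show n + 2 - 2 = n by omega, map_mul]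
  ring

theorem natDegree_redPoly_le (b p : ℕ) : (redPoly N b p).natDegree ≤ N - 1 := by
  refine natDegree_sum_le_of_forall_le _ _ fun j hj => (natDegree_C_mul_le _ _).trans ?_
  rw [natDegree_pow, natDegree_X_sub_C, mul_one]
  simp only [Finset.mem_range] at hj
  omega

theorem relPoly_dvd_sub_redPoly (hN : 2 ≤ N) {b : ℕ} (hb : b < N) :
    ∀ p, relPoly N ∣ (X - C 1) ^ b * X ^ p - redPoly N b p
  | 0 => by simp [redPoly_zero hb]
  | p + 1 => by
    obtain ⟨g, hg⟩ := relPoly_dvd_sub_redPoly hN hb p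
    refine ⟨X * g + C (redCoeff N b p (N - 1)), ?_⟩
    linear_combination X * hg + X_mul_redPoly hN b p

theorem topMinor_redPoly (hN : 2 ≤ N) (b₁ q₁ b₂ q₂ : ℕ) :
    topMinor (N - 2) (redPoly N b₁ q₁) (redPoly N b₂ q₂) =
      redCoeff N b₁ q₁ (N - 1) * redCoeff N b₂ q₂ (N - 2) -
        redCoeff N b₁ q₁ (N - 2) * redCoeff N b₂ q₂ (N - 1) := by
  obtain ⟨n, rfl⟩ : ∃ n, N = n + 2 := ⟨N - 2, by omega⟩
  exact topMinor_sum_C_mul_X_sub_C_one_pow _ _ n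

noncomputable def invX (N : ℕ) : ℚ[X][X] := -(-1) ^ N * divX (relPoly N)

theorem X_mul_invX (hN : 3 ≤ N) : X * invX N = 1 - (-1) ^ N * relPoly N := by
  have h := X_mul_divX_add (relPoly N)
  rw [coeff_zero_relPoly hN, map_pow, map_neg, map_one] at h
  have hsq : (-1 : ℚ[X][X]) ^ N * (-1) ^ N = 1 := by rw [← mul_pow]; norm_num
  rw [invX]
  linear_combination -(-1) ^ N * h + hsq

theorem relPoly_dvd_X_mul_invX_sub_one (hN : 3 ≤ N) : relPoly N ∣ X * invX N - 1 :=
  ⟨-(-1) ^ N, by rw [X_mul_invX hN]; ring⟩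

/-- At every root `y`, this remainder evaluates to `y ^ e * (1 - y⁻¹) ^ lam / (-τ) ^ (lam / N)`. -/
noncomputable def rowPoly (N lam e : ℕ) : ℚ[X][X] :=
  ((X - C 1) ^ (lam % N) * X ^ (e + lam / N * (N - 2)) * invX N ^ lam) %ₘ relPoly N

theorem natDegree_rowPoly_lt (hN : 1 ≤ N) (lam e : ℕ) : (rowPoly N lam e).natDegree < N := by
  have hne : relPoly N ≠ 1 := fun h => by
    have := natDegree_relPoly hN
    rw [h, natDegree_one] at this
    omega
  simpa [rowPoly, natDegree_relPoly hN] using natDegree_modByMonic_lt _ (monic_relPoly hN) hne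

theorem rowPoly_eq_redPoly (hN : 3 ≤ N) {lam e m b : ℕ} (hlam : lam = N * m + b) (hb : b < N)
    (h : 2 * m + b ≤ e) : rowPoly N lam e = redPoly N b (e - 2 * m - b) := by
  have hdiv : lam / N = m := by
    rw [hlam, Nat.mul_add_div (by omega), Nat.div_eq_of_lt hb, add_zero]
  have hmod : lam % N = b := by rw [hlam, Nat.mul_add_mod, Nat.mod_eq_of_lt hb]
  set q := e - 2 * m - b
  have hexp : e + m * (N - 2) = q + lam := by
    have hle : 2 * m ≤ N * m := Nat.mul_le_mul_right _ (by omega)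
    rw [Nat.mul_sub, mul_comm m N]
    omega
  have hmonic := monic_relPoly (N := N) (by omega)
  have hdvd : relPoly N ∣ (X - C 1) ^ b * X ^ (e + m * (N - 2)) * invX N ^ lam -
      redPoly N b q := by
    rw [hexp, pow_add, show ∀ A B P Q : ℚ[X][X], A * (B * P ^ lam) * Q ^ lam - redPoly N b q
        = A * B * ((P * Q) ^ lam - 1 ^ lam) + (A * B - redPoly N b q) by intros; ring]
    exact dvd_add (dvd_mul_of_dvd_right ((relPoly_dvd_X_mul_invX_sub_one hN).trans
      (sub_dvd_pow_sub_pow _ _ _)) _) (relPoly_dvd_sub_redPoly (by omega) hb q)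
  rw [rowPoly, hdiv, hmod, modByMonic_eq_of_dvd_sub hmonic hdvd,
    (modByMonic_eq_self_iff hmonic).2]
  rw [degree_eq_natDegree hmonic.ne_zero, natDegree_relPoly (N := N) (by omega)]
  exact degree_le_natDegree.trans_lt (by exact_mod_cast
    (natDegree_redPoly_le (N := N) _ _).trans_lt (by omega : N - 1 < N))

end Reduction

section Evaluation

variable {K : Type*} [Field K] [CharZero K] {N : ℕ} {τ y : K}

theorem eval₂_relPoly_eq_zero (hy : (y - 1) ^ N + τ * y ^ (N - 2) = 0) :
    (relPoly N).eval₂ (aeval τ).toRingHom y = 0 := by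
  simpa only [relPoly, eval₂_add, eval₂_mul, eval₂_pow, eval₂_sub, eval₂_X, eval₂_C, eval₂_one,
    map_one, AlgHom.toRingHom_eq_coe, RingHom.coe_coe, aeval_X] using hy

theorem mul_eval₂_invX (hN : 3 ≤ N) (hy : (y - 1) ^ N + τ * y ^ (N - 2) = 0) :
    y * (invX N).eval₂ (aeval τ).toRingHom y = 1 := by
  have h := congrArg (eval₂ (aeval τ).toRingHom y) (X_mul_invX hN)
  rwa [eval₂_mul, eval₂_X, eval₂_sub, eval₂_one, eval₂_mul, eval₂_relPoly_eq_zero hy, mul_zero,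
    sub_zero] at h

theorem pow_mul_one_sub_inv_pow_eq_eval₂_rowPoly (hN : 3 ≤ N)
    (hy : (y - 1) ^ N + τ * y ^ (N - 2) = 0) (lam e : ℕ) :
    y ^ e * (1 - y⁻¹) ^ lam = (-τ) ^ (lam / N) * (rowPoly N lam e).eval₂ (aeval τ).toRingHom y := by
  have hinv := mul_eval₂_invX hN hy
  have hy0 : y ≠ 0 := left_ne_zero_of_mul_eq_one hinv
  have hrel : (y - 1) ^ N = -τ * y ^ (N - 2) := by linear_combination hy
  have hlam : (y - 1) ^ lam = (y - 1) ^ (N * (lam / N) + lam % N) := by rw [Nat.div_add_mod]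
  rw [rowPoly, eval₂_modByMonic_eq_self_of_root (eval₂_relPoly_eq_zero hy)]
  simp only [eval₂_mul, eval₂_pow, eval₂_sub, eval₂_X, eval₂_one, map_one,
    eq_inv_of_mul_eq_one_right hinv]
  rw [show 1 - y⁻¹ = (y - 1) * y⁻¹ by field_simp, mul_pow, hlam, pow_add, pow_mul, hrel]
  ring

end Evaluation

noncomputable def schurPoly (N lam1 lam2 d : ℕ) : ℚ[X] :=
  (-X) ^ ((lam1 + 1) / N + lam2 / N) *
    topMinor (N - 2) (rowPoly N (lam1 + 1) (d + (N - 1))) (rowPoly N lam2 (d + (N - 2)))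

theorem svalRank2_eq_aeval_schurPoly {K : Type*} [Field K] [CharZero K] {N : ℕ} (hN : 3 ≤ N)
    {τ : K} {z : Fin N → K} (hz : Function.Injective z)
    (hroots : ∀ j, (z j - 1) ^ N + τ * z j ^ (N - 2) = 0) (lam1 lam2 d : ℕ) :
    svalRank2 N z lam1 lam2 d = aeval τ (schurPoly N lam1 lam2 d) := by
  set ψ := (aeval τ : ℚ[X] →ₐ[ℚ] K).toRingHom
  set row : ℕ → ℕ → K[X] := fun lam e => C ((-τ) ^ (lam / N)) * (rowPoly N lam e).map ψ
  have hdeg : ∀ lam e, (row lam e).natDegree < N := fun lam e =>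
    (natDegree_C_mul_le _ _).trans_lt
      ((natDegree_map_le).trans_lt (natDegree_rowPoly_lt (by omega) lam e))
  have heval : ∀ lam e j, z j ^ e * (1 - (z j)⁻¹) ^ lam = (row lam e).eval (z j) := by
    intro lam e j
    rw [eval_mul, eval_C, eval_map,
      pow_mul_one_sub_inv_pow_eq_eval₂_rowPoly hN (hroots j)]
  rw [svalRank2, genSchurFun_two_eq_topMinor (by omega) hz _ (hdeg (lam1 + 1) (d + (N - 1)))
    (hdeg lam2 (d + (N - 2))), topMinor_C_mul_map, schurPoly]
  · simp [ψ, pow_add]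
  all_goals
    intro j
    simp only [Matrix.cons_val_zero, Matrix.cons_val_one, ← heval, pow_add]
    ring

theorem coeff_schurPoly {N lam1 lam2 : ℕ} (h1 : 2 * N ≤ lam1 + 1) (h2 : lam1 + 5 ≤ 3 * N)
    (hlam : lam2 ≤ lam1) (d : ℕ) :
    (schurPoly N lam1 lam2 d).coeff d = if 3 ≤ d ∧ 2 + lam2 / N ≤ d then 1 else 0 := by
  have hN : 4 ≤ N := by omega
  have hq₁ : (lam1 + 1) / N = 2 := Nat.div_eq_of_lt_le (by linarith) (by linarith)
  rw [schurPoly, coeff_neg_X_pow_mul, hq₁]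
  set m := lam2 / N
  have hlam₂ : lam2 = N * m + lam2 % N := (Nat.div_add_mod lam2 N).symm
  have hb : lam2 % N < N := Nat.mod_lt _ (by omega)
  set b := lam2 % N
  clear_value m b
  have hm : m < 3 := by
    by_contra! h
    nlinarith
  have hm₂ : m = 2 → b + 5 ≤ N := by
    rintro rfl
    omega
  by_cases hd : 2 + m ≤ d
  swap
  · rw [if_neg hd, if_neg (by omega)]
  rw [if_pos hd, rowPoly_eq_redPoly (e := d + (N - 1)) (m := 2) (b := lam1 + 1 - 2 * N)
      (by omega) (by omega) (by omega) (by omega),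
    rowPoly_eq_redPoly (e := d + (N - 2)) (by omega) hlam₂ hb (by omega),
    topMinor_redPoly (by omega), coeff_sub,
    coeff_redCoeff_mul_redCoeff (by omega) (by omega) hb (by omega) (by omega) le_rfl (by omega)
      (by omega),
    coeff_redCoeff_mul_redCoeff (by omega) (by omega) hb le_rfl (by omega) (by omega) (by omega)
      (by omega)]
  have hsign : (-1 : ℚ) ^ (2 + m) * (-1) ^ (d - (2 + m)) = (-1) ^ d := by
    rw [← pow_add, Nat.add_sub_cancel' hd]
  split_ifs <;> first
    | omega
    | (rw [sub_zero, hsign]; exact Even.neg_one_pow ⟨d / 2, by omega⟩)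
    | (rw [zero_sub, mul_neg, hsign, Odd.neg_one_pow ⟨d / 2, by omega⟩, neg_neg])
    | simp

end Rank2Quot

open Rank2Quot in
theorem stmt11_general {K : Type*} [Field K] [CharZero K] (N : ℕ)
    (k : ℕ) (hk : k = N - 2)
    (τ : K) (hτ : Transcendental ℚ τ)
    (z : Fin N → K) (hz : Function.Injective z)
    (hroots : ∏ i, (Polynomial.X - Polynomial.C (z i)) =
      (Polynomial.X - Polynomial.C (1 : K)) ^ N + Polynomial.C τ * Polynomial.X ^ (N - 2))
    (lam1 lam2 : ℕ) (hlam : lam2 ≤ lam1)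
    (hlo : 2 * k + 2 < lam1) (hup : lam1 ≤ 3 * k + 1) :
    (lam2 < 2 * N →
      (∀ d : ℕ, d ≤ 2 → ∀ F : Polynomial ℚ,
        Polynomial.aeval τ F = svalRank2 N z lam1 lam2 d → F.coeff d = 0) ∧
      (∀ d : ℕ, 3 ≤ d → ∀ F : Polynomial ℚ,
        Polynomial.aeval τ F = svalRank2 N z lam1 lam2 d → F.coeff d = 1)) ∧
    (2 * N ≤ lam2 →
      (∀ d : ℕ, d ≤ 3 → ∀ F : Polynomial ℚ,
        Polynomial.aeval τ F = svalRank2 N z lam1 lam2 d → F.coeff d = 0) ∧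
      (∀ d : ℕ, 4 ≤ d → ∀ F : Polynomial ℚ,
        Polynomial.aeval τ F = svalRank2 N z lam1 lam2 d → F.coeff d = 1)) := by
  subst hk
  have hrel : ∀ j, (z j - 1) ^ N + τ * z j ^ (N - 2) = 0 := fun j => by
    simpa [eval_prod, Finset.prod_eq_zero (Finset.mem_univ j)] using
      (congrArg (eval (z j)) hroots).symm
  have hcoeff : ∀ d (F : ℚ[X]), aeval τ F = svalRank2 N z lam1 lam2 d →
      F.coeff d = if 3 ≤ d ∧ 2 + lam2 / N ≤ d then 1 else 0 := fun d F hF => by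
    rw [transcendental_iff_injective.1 hτ
      (hF.trans (svalRank2_eq_aeval_schurPoly (by omega) hz hrel lam1 lam2 d)),
      coeff_schurPoly (by omega) (by omega) hlam]
  have hN : 0 < N := by omega
  refine ⟨fun h => ?_, fun h => ?_⟩
  · have hm : lam2 / N < 2 := (Nat.div_lt_iff_lt_mul hN).2 (by omega)
    exact ⟨fun d hd F hF => by rw [hcoeff d F hF, if_neg (by omega)],
      fun d hd F hF => by rw [hcoeff d F hF, if_pos (by omega)]⟩
  · have hm : lam2 / N < 3 := (Nat.div_lt_iff_lt_mul hN).2 (by omega)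
    have hm₂ : 2 ≤ lam2 / N := (Nat.le_div_iff_mul_le hN).2 (by omega)
    exact ⟨fun d hd F hF => by rw [hcoeff d F hF, if_neg (by omega)],
      fun d hd F hF => by rw [hcoeff d F hF, if_pos (by omega)]⟩

/-- Rank-2 roots setup (`k = N-2`,
`∏(X - z_i) = (X-1)^N + τ X^{N-2}`, `τ` transcendental over `ℚ`). For a partition
`λ = (λ_1 ≥ λ_2 ≥ 0)` with `2k+2 < λ_1 ≤ 3k+1`: if `λ_2 < 2N` then `c_d = 0` for `d ≤ 2`
and `c_d = 1` for `d ≥ 3`; if `λ_2 ≥ 2N` then `c_d = 0` for `d ≤ 3` and `c_d = 1` for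
`d ≥ 4`. -/
theorem stmt11 {K : Type*} [Field K] [CharZero K] (N : ℕ) (hN : 3 ≤ N)
    (k : ℕ) (hk : k = N - 2)
    (τ : K) (hτ : Transcendental ℚ τ)
    (z : Fin N → K) (hz : Function.Injective z)
    (hroots : ∏ i, (Polynomial.X - Polynomial.C (z i)) =
      (Polynomial.X - Polynomial.C (1 : K)) ^ N + Polynomial.C τ * Polynomial.X ^ (N - 2))
    (lam1 lam2 : ℕ) (hlam : lam2 ≤ lam1)
    (hlo : 2 * k + 2 < lam1) (hup : lam1 ≤ 3 * k + 1) :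
    (lam2 < 2 * N →
      (∀ d : ℕ, d ≤ 2 → ∀ F : Polynomial ℚ,
        Polynomial.aeval τ F = svalRank2 N z lam1 lam2 d → F.coeff d = 0) ∧
      (∀ d : ℕ, 3 ≤ d → ∀ F : Polynomial ℚ,
        Polynomial.aeval τ F = svalRank2 N z lam1 lam2 d → F.coeff d = 1)) ∧
    (2 * N ≤ lam2 →
      (∀ d : ℕ, d ≤ 3 → ∀ F : Polynomial ℚ,
        Polynomial.aeval τ F = svalRank2 N z lam1 lam2 d → F.coeff d = 0) ∧
      (∀ d : ℕ, 4 ≤ d → ∀ F : Polynomial ℚ,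
        Polynomial.aeval τ F = svalRank2 N z lam1 lam2 d → F.coeff d = 1)) :=
  stmt11_general N k hk τ hτ z hz hroots lam1 lam2 hlam hlo hup
end
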